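/- arXiv:1308.6223 — 8 statements merged into one kernel-verified Lean document; each statement's English description precedes it below -/
import Mathlib

section
/- Let I ⊆ {1,…,n} with |I| = k and let α, β ∈ ℂ. Set c := α·Γ_I and d := β·Γ_I. Then for every μ ∈ {1,…,n}: if μ ∈ I then q_{c,d}(Γ_μ) = σ_I·(α + (−1)^k·β)²·Γ_μ, and if μ ∉ I then q_{c,d}(Γ_μ) = σ_I·(α − (−1)^k·β)²·Γ_μ. In particular (c,d) is a quadratic Clifford pair whose associated endomorphism of ℂⁿ is diagonal with the two eigenvalues σ_I(α+(−1)^kβ)² (on the coordinates in I) and σ_I(α−(−1)^kβ)² (on the remaining coordinates). -/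
noncomputable section

/-- The quadratic form `Q(v) = -∑ v μ ^ 2` on `ℂⁿ`. -/
def Qf (n : ℕ) : QuadraticForm ℂ (Fin n → ℂ) :=
  QuadraticMap.weightedSumSquares ℂ (fun _ : Fin n => (-1 : ℂ))

/-- The Clifford algebra of `Qf n`. -/
abbrev Cl (n : ℕ) := CliffordAlgebra (Qf n)

/-- The canonical embedding `ℂⁿ → Cℓ`. -/
def emb (n : ℕ) : (Fin n → ℂ) →ₗ[ℂ] Cl n := CliffordAlgebra.ι (Qf n)

/-- `Γ_μ = ι(e_μ)`. -/
def Γg (n : ℕ) (μ : Fin n) : Cl n := emb n (Pi.single μ 1)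

/-- `Γ_I = Γ_{i₁} ⋯ Γ_{i_k}` with `i₁ < ⋯ < i_k` the elements of `I`. -/
def ΓI (n : ℕ) (I : Finset (Fin n)) : Cl n :=
  ((I.sort (· ≤ ·)).map (Γg n)).prod

/-- `q_{a,b}(x) = a²x + xb² − 2axb`. -/
def qp {n : ℕ} (a b x : Cl n) : Cl n := a ^ 2 * x + x * b ^ 2 - 2 * a * x * b

/-- `s_{a,b}(x) = ax − xb`. -/
def sp {n : ℕ} (a b x : Cl n) : Cl n := a * x - x * b

/-- `σ_k = (−1)^{k(k+1)/2}`. -/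
def σs (k : ℕ) : ℂ := (-1 : ℂ) ^ (k * (k + 1) / 2)

lemma gamma_sq (n : ℕ) (μ : Fin n) : Γg n μ * Γg n μ = -1 := by
  unfold Γg emb
  rw [CliffordAlgebra.ι_sq_scalar]
  have : Qf n (Pi.single μ 1) = -1 := by
    simp [Qf, QuadraticMap.weightedSumSquares_apply, Pi.single_apply]
  rw [this]; simp

lemma gamma_anticomm {n : ℕ} {μ ν : Fin n} (h : μ ≠ ν) :
    Γg n μ * Γg n ν = -(Γg n ν * Γg n μ) := by
  have key := CliffordAlgebra.ι_mul_ι_add_swap (Q := Qf n) (Pi.single μ 1) (Pi.single ν 1)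
  have hp : QuadraticMap.polar (Qf n) (Pi.single μ 1) (Pi.single ν 1) = 0 := by
    simp [QuadraticMap.polar, Qf, QuadraticMap.weightedSumSquares_apply, Pi.single_apply,
      Finset.sum_add_distrib, add_mul, mul_add, h, h.symm]
  rw [hp] at key
  simp at key
  unfold Γg emb
  linear_combination (norm := noncomm_ring) key

lemma prod_mul_gamma_not_mem {n : ℕ} (μ : Fin n) :
    ∀ (l : List (Fin n)), μ ∉ l →
      ((l.map (Γg n)).prod) * Γg n μ = ((-1 : ℂ) ^ l.length) • (Γg n μ * (l.map (Γg n)).prod)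
  | [], _ => by simp
  | a :: t, hmem => by
    have ha : μ ≠ a := fun h => hmem (h ▸ (List.mem_cons_self : a ∈ a :: t))
    have ht : μ ∉ t := fun h => hmem (List.mem_cons_of_mem a h)
    have ih := prod_mul_gamma_not_mem μ t ht
    simp only [List.map_cons, List.prod_cons, List.length_cons]
    rw [mul_assoc, ih, mul_smul_comm, ← mul_assoc, gamma_anticomm ha.symm, pow_succ]
    simp [mul_smul, neg_mul, mul_assoc]

lemma prod_mul_gamma_mem {n : ℕ} (μ : Fin n) :
    ∀ (l : List (Fin n)), l.Nodup → μ ∈ l →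
      ((l.map (Γg n)).prod) * Γg n μ = ((-1 : ℂ) ^ (l.length + 1)) • (Γg n μ * (l.map (Γg n)).prod)
  | [], _, hmem => by simp at hmem
  | a :: t, hnd, hmem => by
    simp only [List.map_cons, List.prod_cons, List.length_cons]
    rcases List.mem_cons.mp hmem with h | h
    · subst h
      have ht : μ ∉ t := (List.nodup_cons.mp hnd).1
      rw [mul_assoc, prod_mul_gamma_not_mem μ t ht, mul_smul_comm, ← mul_assoc]
      rw [pow_succ, pow_succ]
      simp [mul_smul, mul_assoc]
    · have ha : μ ≠ a := fun he => (List.nodup_cons.mp hnd).1 (he ▸ h)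
      have ih := prod_mul_gamma_mem μ t (List.nodup_cons.mp hnd).2 h
      rw [mul_assoc, ih, mul_smul_comm, ← mul_assoc, gamma_anticomm ha.symm, pow_succ]
      simp only [mul_smul, neg_mul, mul_assoc, neg_smul, smul_neg, neg_neg, pow_succ]
      simp [mul_smul]

lemma prod_sq {n : ℕ} : ∀ (l : List (Fin n)), l.Nodup →
    ((l.map (Γg n)).prod) * ((l.map (Γg n)).prod) = ((-1 : ℂ) ^ (l.length * (l.length + 1) / 2)) • 1
  | [], _ => by simp
  | a :: t, hnd => by
    have ht : a ∉ t := (List.nodup_cons.mp hnd).1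
    have ih := prod_sq t (List.nodup_cons.mp hnd).2
    simp only [List.map_cons, List.prod_cons, List.length_cons]
    calc Γg n a * (t.map (Γg n)).prod * (Γg n a * (t.map (Γg n)).prod)
        = Γg n a * ((t.map (Γg n)).prod * Γg n a) * (t.map (Γg n)).prod := by noncomm_ring
      _ = ((-1:ℂ)^t.length) • (Γg n a * (Γg n a * (t.map (Γg n)).prod) * (t.map (Γg n)).prod) := by
          rw [prod_mul_gamma_not_mem a t ht]; simp [mul_smul_comm, smul_mul_assoc]
      _ = ((-1:ℂ)^t.length) • ((Γg n a * Γg n a) * ((t.map (Γg n)).prod * (t.map (Γg n)).prod)) := by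
          noncomm_ring
      _ = ((-1:ℂ)^((t.length+1) * (t.length+1+1) / 2)) • 1 := by
          rw [gamma_sq, ih]
          have he : (t.length+1) * (t.length+1+1) / 2 = t.length * (t.length+1)/2 + (t.length+1) := by
            have h1 : (t.length+1)*(t.length+1+1) = t.length*(t.length+1) + (t.length+1) * 2 := by
              ring
            rw [h1, Nat.add_mul_div_right _ _ (by norm_num : 0 < 2)]
          rw [he, pow_add, pow_succ]
          simp [smul_smul, Algebra.mul_smul_comm]
          ring_nf

lemma key {n : ℕ} (G M : Cl n) (σ ε α β : ℂ) (hGG : G * G = σ • 1)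
    (hGM : G * M = ε • (M * G)) :
    qp (α • G) (β • G) M = (σ * (α ^ 2 + β ^ 2 - 2 * α * β * ε)) • M := by
  have hMG : G * M * G = (ε * σ) • M := by
    rw [hGM, smul_mul_assoc, mul_assoc, hGG, mul_smul_comm, mul_one, smul_smul]
  have h2 : (2 : Cl n) * (α • G) = (2 : ℂ) • (α • G) := by rw [two_mul, two_smul]
  have hA : (α • G) ^ 2 * M = (α ^ 2 * σ) • M := by
    rw [smul_pow, sq G, hGG, smul_smul, smul_mul_assoc, one_mul]
  have hB : M * (β • G) ^ 2 = (β ^ 2 * σ) • M := by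
    rw [smul_pow, sq G, hGG, smul_smul, mul_smul_comm, mul_one]
  have hC : 2 * (α • G) * M * (β • G) = (2 * α * β * ε * σ) • M := by
    rw [h2]
    simp only [smul_mul_assoc, mul_smul_comm, smul_smul]
    rw [hMG, smul_smul]
    congr 1; ring
  unfold qp
  rw [hA, hB, hC, ← add_smul, ← sub_smul]
  congr 1; ring

/-- eigenvalue formula for monomial quadratic Clifford pairs. -/
theorem stmt_0 (n : ℕ) (hn : 1 ≤ n) (I : Finset (Fin n)) (k : ℕ) (hk : I.card = k)
    (α β : ℂ) (c d : Cl n) (hc : c = α • ΓI n I) (hd : d = β • ΓI n I) (μ : Fin n) :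
    (μ ∈ I → qp c d (Γg n μ) = (σs k * (α + (-1 : ℂ) ^ k * β) ^ 2) • Γg n μ) ∧
    (μ ∉ I → qp c d (Γg n μ) = (σs k * (α - (-1 : ℂ) ^ k * β) ^ 2) • Γg n μ) := by
  subst hk hc hd
  have hnd : (I.sort (· ≤ ·)).Nodup := I.sort_nodup _
  have hGG : ΓI n I * ΓI n I = σs I.card • 1 := by
    have h := prod_sq (I.sort (· ≤ ·)) hnd
    rwa [Finset.length_sort] at h
  have hsq : ((-1 : ℂ) ^ I.card) ^ 2 = 1 := by
    rw [← pow_mul, mul_comm, pow_mul]; norm_num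
  constructor
  · intro hmu
    have hml : μ ∈ I.sort (· ≤ ·) := (Finset.mem_sort _).mpr hmu
    have hGM : ΓI n I * Γg n μ = ((-1 : ℂ) ^ (I.card + 1)) • (Γg n μ * ΓI n I) := by
      have h := prod_mul_gamma_mem μ (I.sort (· ≤ ·)) hnd hml
      rwa [Finset.length_sort] at h
    rw [key (ΓI n I) (Γg n μ) (σs I.card) _ α β hGG hGM]
    congr 1
    rw [pow_succ]
    linear_combination (-(σs I.card * β ^ 2)) * hsq
  · intro hmu
    have hml : μ ∉ I.sort (· ≤ ·) := fun h => hmu ((Finset.mem_sort _).mp h)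
    have hGM : ΓI n I * Γg n μ = ((-1 : ℂ) ^ I.card) • (Γg n μ * ΓI n I) := by
      have h := prod_mul_gamma_not_mem μ (I.sort (· ≤ ·)) hml
      rwa [Finset.length_sort] at h
    rw [key (ΓI n I) (Γg n μ) (σs I.card) _ α β hGG hGM]
    congr 1
    linear_combination (-(σs I.card * β ^ 2)) * hsq
end
end

section
/- Let (I_α)_{α∈A} be a finite family of pairwise disjoint subsets of {1,…,n} such that at most one I_α has odd cardinality, and let c_α ∈ ℂ. Set c := ∑_α c_α·Γ_{I_α} and d := ∑_α (−1)^{|I_α|}·c_α·Γ_{I_α}. Then for every μ ∈ {1,…,n}: if μ ∈ I_α for some α, then q_{c,d}(Γ_μ) = 4·σ_{I_α}·c_α²·Γ_μ, and if μ lies in none of the I_α then q_{c,d}(Γ_μ) = 0. (Generalized monomial quadratic Clifford pairs: the associated endomorphism is diagonal with eigenvalue 4σ_{I_α}c_α² on the coordinates in I_α and 0 outside ⋃_α I_α.) -/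
noncomputable section

namespace Stmt3Aux

lemma neg_one_sq_pow (k : ℕ) : ((-1:ℂ))^k * (-1)^k = 1 := by
  rw [← pow_add]; exact Even.neg_one_pow ⟨k, rfl⟩

lemma flip_smul {n : ℕ} (t : ℂ) (ht : t * t = 1) {a b : Cl n} (h : a = t • b) : b = t • a := by
  rw [h, smul_smul, ht, one_smul]

lemma Γ_sq (n : ℕ) (μ : Fin n) : Γg n μ * Γg n μ = -1 := by
  rw [Γg, emb, CliffordAlgebra.ι_sq_scalar]
  have h : Qf n (Pi.single μ 1) = -1 := by
    simp [Qf, QuadraticMap.weightedSumSquares_apply, Pi.single_apply]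
  rw [h, map_neg, map_one]

lemma Γ_anticomm (n : ℕ) {μ ν : Fin n} (h : μ ≠ ν) :
    Γg n μ * Γg n ν = - (Γg n ν * Γg n μ) := by
  set x : Fin n → ℂ := Pi.single μ 1 with hx
  set y : Fin n → ℂ := Pi.single ν 1 with hy
  have key := CliffordAlgebra.ι_mul_ι_add_swap (Q := Qf n) x y
  have hQ : ∀ v : Fin n → ℂ, Qf n v = ∑ i, -(v i * v i) := fun v => by
    simp [Qf, QuadraticMap.weightedSumSquares_apply]
  have h1 : ∀ i, (x + y) i * (x + y) i = x i * x i + y i * y i := by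
    intro i
    simp only [hx, hy, Pi.add_apply, Pi.single_apply]
    split_ifs <;> simp_all
  have hp : QuadraticMap.polar (Qf n) x y = 0 := by
    rw [QuadraticMap.polar, hQ, hQ, hQ]
    rw [show (∑ i, -((x + y) i * (x + y) i)) = ∑ i, (-(x i * x i) + -(y i * y i))
      from Finset.sum_congr rfl fun i _ => by rw [h1 i]; ring]
    rw [Finset.sum_add_distrib]
    ring
  rw [hp, map_zero] at key
  rw [Γg, Γg, emb]
  exact eq_neg_of_add_eq_zero_left key

/-- Product of gammas along a list. -/
def ΓL (n : ℕ) (l : List (Fin n)) : Cl n := (l.map (Γg n)).prod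

lemma ΓI_eq_ΓL (n : ℕ) (I : Finset (Fin n)) : ΓI n I = ΓL n (I.sort (· ≤ ·)) := rfl

lemma move_const (n : ℕ) (x : Cl n) (t : ℂ) :
    ∀ l : List (Fin n), (∀ ν ∈ l, x * Γg n ν = t • (Γg n ν * x)) →
      x * ΓL n l = t ^ l.length • (ΓL n l * x)
  | [], _ => by simp [ΓL]
  | ν :: l, h => by
    have h1 := h ν ((List.mem_cons_self : ν ∈ ν :: l))
    have h2 := move_const n x t l (fun m hm => h m (List.mem_cons_of_mem _ hm))
    simp only [ΓL, List.map_cons, List.prod_cons, List.length_cons] at *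
    rw [← mul_assoc, h1, smul_mul_assoc, mul_assoc, h2, mul_smul_comm, smul_smul,
      pow_succ, mul_comm (t ^ l.length) t, mul_assoc]

lemma gamma_move (n : ℕ) (μ : Fin n) :
    ∀ l : List (Fin n), l.Nodup →
      Γg n μ * ΓL n l =
        (((-1:ℂ)) ^ l.length * (if μ ∈ l then -1 else 1)) • (ΓL n l * Γg n μ)
  | [], _ => by simp [ΓL]
  | ν :: l, h => by
    obtain ⟨hν, hl⟩ := List.nodup_cons.mp h
    have ih := gamma_move n μ l hl
    have hs : Γg n μ * Γg n ν = (if ν = μ then (1:ℂ) else -1) • (Γg n ν * Γg n μ) := by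
      by_cases hh : ν = μ
      · subst hh; simp
      · rw [if_neg hh, Γ_anticomm n (Ne.symm hh)]; simp
    simp only [ΓL, List.map_cons, List.prod_cons, List.length_cons] at *
    have step : Γg n μ * (Γg n ν * (l.map (Γg n)).prod)
        = ((if ν = μ then (1:ℂ) else -1) * ((-1:ℂ)^l.length * (if μ ∈ l then -1 else 1)))
          • (Γg n ν * (l.map (Γg n)).prod * Γg n μ) := by
      rw [← mul_assoc, hs, smul_mul_assoc, mul_assoc, ih, mul_smul_comm, smul_smul,
        ← mul_assoc (Γg n ν)]
    rw [step]
    congr 1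
    by_cases hh : ν = μ
    · have hμl : μ ∉ l := hh ▸ hν
      rw [if_pos hh, if_neg hμl, if_pos (hh ▸ (List.mem_cons_self : ν ∈ ν :: l)), pow_succ]
      ring
    · have hmem : (μ ∈ ν :: l) ↔ μ ∈ l := by
        constructor
        · intro hm
          rcases List.mem_cons.mp hm with rfl | hm
          · exact absurd rfl hh
          · exact hm
        · exact List.mem_cons_of_mem ν
      rw [if_neg hh]
      by_cases hm : μ ∈ l
      · rw [if_pos hm, if_pos (hmem.mpr hm), pow_succ]; ring
      · rw [if_neg hm, if_neg (fun hx => hm (hmem.mp hx)), pow_succ]; ring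

lemma σs_succ (k : ℕ) : σs (k+1) = (-1:ℂ)^(k+1) * σs k := by
  unfold σs
  rw [← pow_add]
  congr 1
  have he : k*(k+1) % 2 = 0 := Nat.even_iff.mp (Nat.even_mul_succ_self k)
  have h : (k+1)*(k+1+1) = k*(k+1) + 2*(k+1) := by ring
  omega

lemma ΓL_sq (n : ℕ) : ∀ l : List (Fin n), l.Nodup →
    ΓL n l * ΓL n l = σs l.length • 1
  | [], _ => by simp [ΓL, σs]
  | ν :: l, h => by
    obtain ⟨hν, hl⟩ := List.nodup_cons.mp h
    have ih := ΓL_sq n l hl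
    have hmove := gamma_move n ν l hl
    rw [if_neg hν, mul_one] at hmove
    have hflip : ΓL n l * Γg n ν = ((-1:ℂ))^l.length • (Γg n ν * ΓL n l) :=
      flip_smul _ (neg_one_sq_pow _) hmove
    simp only [ΓL, List.map_cons, List.prod_cons, List.length_cons] at *
    calc Γg n ν * (l.map (Γg n)).prod * (Γg n ν * (l.map (Γg n)).prod)
        = Γg n ν * ((l.map (Γg n)).prod * Γg n ν) * (l.map (Γg n)).prod := by
          noncomm_ring
      _ = ((-1:ℂ))^l.length • (Γg n ν * (Γg n ν * (l.map (Γg n)).prod) * (l.map (Γg n)).prod) := by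
          rw [hflip]; simp [mul_smul_comm, smul_mul_assoc]
      _ = ((-1:ℂ))^l.length • ((Γg n ν * Γg n ν) * ((l.map (Γg n)).prod * (l.map (Γg n)).prod)) := by
          congr 1; noncomm_ring
      _ = σs (l.length + 1) • 1 := by
          rw [Γ_sq, ih]
          have h1 : ((-1 : Cl n)) * (σs l.length • 1) = (-σs l.length) • 1 := by
            simp
          rw [h1, smul_smul, σs_succ]
          congr 1
          rw [pow_succ]
          ring

lemma gamma_comm_ΓI (n : ℕ) (μ : Fin n) (I : Finset (Fin n)) :
    Γg n μ * ΓI n I = ((-1:ℂ)^I.card * (if μ ∈ I then -1 else 1)) • (ΓI n I * Γg n μ) := by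
  rw [ΓI_eq_ΓL]
  have h := gamma_move n μ (I.sort (· ≤ ·)) (I.sort_nodup _)
  rwa [Finset.length_sort, show (if μ ∈ I.sort (· ≤ ·) then (-1:ℂ) else 1) = (if μ ∈ I then -1 else 1)
    from by simp [Finset.mem_sort]] at h

lemma ΓI_sq (n : ℕ) (I : Finset (Fin n)) : ΓI n I * ΓI n I = σs I.card • 1 := by
  rw [ΓI_eq_ΓL]
  have h := ΓL_sq n (I.sort (· ≤ ·)) (I.sort_nodup _)
  rwa [Finset.length_sort] at h

lemma ΓI_commute (n : ℕ) {I J : Finset (Fin n)} (hdisj : Disjoint I J)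
    (he : Even (I.card * J.card)) : ΓI n I * ΓI n J = ΓI n J * ΓI n I := by
  have key : ∀ ν ∈ J.sort (· ≤ ·), ΓI n I * Γg n ν = ((-1:ℂ)^I.card) • (Γg n ν * ΓI n I) := by
    intro ν hν
    have hνI : ν ∉ I := fun hx => (Finset.disjoint_left.mp hdisj hx) ((Finset.mem_sort _).mp hν)
    have h := gamma_comm_ΓI n ν I
    rw [if_neg hνI, mul_one] at h
    exact flip_smul _ (neg_one_sq_pow _) h
  have h := move_const n (ΓI n I) ((-1:ℂ)^I.card) (J.sort (· ≤ ·)) key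
  rw [Finset.length_sort, ← pow_mul, Even.neg_one_pow he, one_smul] at h
  rw [ΓI_eq_ΓL n J]
  exact h

/-- sign: `-1` if `μ ∈ I`, else `1`. -/
def sgn {n : ℕ} (μ : Fin n) (I : Finset (Fin n)) : ℂ := if μ ∈ I then -1 else 1

lemma gamma_comm_ΓI' (n : ℕ) (μ : Fin n) (I : Finset (Fin n)) :
    Γg n μ * ΓI n I = ((-1:ℂ)^I.card * sgn μ I) • (ΓI n I * Γg n μ) :=
  gamma_comm_ΓI n μ I

end Stmt3Aux

open Stmt3Aux in
/-- generalized monomial quadratic Clifford pairs. -/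
theorem stmt_3 (n : ℕ) (hn : 1 ≤ n) (A : Type*) [Fintype A]
    (I : A → Finset (Fin n))
    (hdisj : ∀ a b : A, a ≠ b → Disjoint (I a) (I b))
    (hodd : ∀ a b : A, Odd (I a).card → Odd (I b).card → a = b)
    (c_ : A → ℂ) (c d : Cl n)
    (hc : c = ∑ a : A, c_ a • ΓI n (I a))
    (hd : d = ∑ a : A, ((-1 : ℂ) ^ (I a).card * c_ a) • ΓI n (I a))
    (μ : Fin n) :
    (∀ a : A, μ ∈ I a →
      qp c d (Γg n μ) = (4 * σs (I a).card * c_ a ^ 2) • Γg n μ) ∧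
    ((∀ a : A, μ ∉ I a) → qp c d (Γg n μ) = 0) := by
  classical
  set s : A → ℂ := fun a => sgn μ (I a) with hs
  set K : A → A → ℂ := fun a b => c_ a * c_ b * (1 + s a * s b - 2 * s b) with hK
  have hΓd : Γg n μ * d = ∑ b : A, (c_ b * s b) • (ΓI n (I b) * Γg n μ) := by
    rw [hd, Finset.mul_sum]
    refine Finset.sum_congr rfl fun b _ => ?_
    rw [mul_smul_comm, gamma_comm_ΓI' n μ (I b), smul_smul]
    congr 1
    have h1 := neg_one_sq_pow (I b).card
    simp only [hs]
    linear_combination (c_ b * sgn μ (I b)) * h1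
  have hcX : ∀ x : Cl n, c * x = ∑ a : A, c_ a • (ΓI n (I a) * x) := by
    intro x; rw [hc, Finset.sum_mul]
    exact Finset.sum_congr rfl fun a _ => smul_mul_assoc _ _ _
  have e1 : c ^ 2 * Γg n μ
      = ∑ a : A, ∑ b : A, (c_ a * c_ b) • (ΓI n (I a) * (ΓI n (I b) * Γg n μ)) := by
    rw [pow_two, mul_assoc, hcX (Γg n μ), Finset.mul_sum]
    rw [Finset.sum_congr rfl fun b (_ : b ∈ Finset.univ) => show
        c * (c_ b • (ΓI n (I b) * Γg n μ))
          = ∑ a : A, (c_ a * c_ b) • (ΓI n (I a) * (ΓI n (I b) * Γg n μ)) from by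
      rw [mul_smul_comm, hcX (ΓI n (I b) * Γg n μ), Finset.smul_sum]
      exact Finset.sum_congr rfl fun a _ => by rw [smul_smul, mul_comm]]
    exact Finset.sum_comm
  have e2 : Γg n μ * d ^ 2
      = ∑ a : A, ∑ b : A, ((c_ a * s a) * (c_ b * s b)) •
          (ΓI n (I a) * (ΓI n (I b) * Γg n μ)) := by
    rw [pow_two, ← mul_assoc, hΓd, Finset.sum_mul]
    refine Finset.sum_congr rfl fun a _ => ?_
    rw [smul_mul_assoc, mul_assoc, hΓd, Finset.mul_sum, Finset.smul_sum]
    exact Finset.sum_congr rfl fun b _ => by rw [mul_smul_comm, smul_smul]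
  have e3 : c * Γg n μ * d
      = ∑ a : A, ∑ b : A, (c_ a * (c_ b * s b)) •
          (ΓI n (I a) * (ΓI n (I b) * Γg n μ)) := by
    rw [mul_assoc, hΓd, Finset.mul_sum]
    rw [Finset.sum_congr rfl fun b (_ : b ∈ Finset.univ) => show
        c * ((c_ b * s b) • (ΓI n (I b) * Γg n μ))
          = ∑ a : A, (c_ a * (c_ b * s b)) • (ΓI n (I a) * (ΓI n (I b) * Γg n μ)) from by
      rw [mul_smul_comm, hcX (ΓI n (I b) * Γg n μ), Finset.smul_sum]
      exact Finset.sum_congr rfl fun a _ => by rw [smul_smul, mul_comm]]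
    exact Finset.sum_comm
  have hqp : qp c d (Γg n μ)
      = ∑ a : A, ∑ b : A, K a b • (ΓI n (I a) * (ΓI n (I b) * Γg n μ)) := by
    have h2 : (2 : Cl n) * c * Γg n μ * d = (2:ℂ) • (c * Γg n μ * d) := by
      have : (2 : Cl n) * c * Γg n μ * d = c * Γg n μ * d + c * Γg n μ * d := by
        noncomm_ring
      rw [this, two_smul]
    rw [qp, h2, e1, e2, e3, Finset.smul_sum]
    rw [Finset.sum_congr rfl fun a (_ : a ∈ Finset.univ) =>
      (Finset.smul_sum (r := (2:ℂ)))]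
    rw [← Finset.sum_add_distrib, ← Finset.sum_sub_distrib]
    refine Finset.sum_congr rfl fun a _ => ?_
    rw [← Finset.sum_add_distrib, ← Finset.sum_sub_distrib]
    refine Finset.sum_congr rfl fun b _ => ?_
    rw [smul_smul, ← add_smul, ← sub_smul]
    congr 1
    simp only [hK]
    ring
  constructor
  · intro α hα
    have hsα : s α = -1 := by simp only [hs, sgn]; rw [if_pos hα]
    have hso : ∀ b : A, b ≠ α → s b = 1 := by
      intro b hb
      have : μ ∉ I b := fun hm => (Finset.disjoint_left.mp (hdisj b α hb) hm) hα
      simp only [hs, sgn]; rw [if_neg this]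
    have hXsymm : ∀ b : A, b ≠ α →
        ΓI n (I b) * (ΓI n (I α) * Γg n μ) = ΓI n (I α) * (ΓI n (I b) * Γg n μ) := by
      intro b hb
      have hcomm : ΓI n (I b) * ΓI n (I α) = ΓI n (I α) * ΓI n (I b) := by
        apply ΓI_commute n (hdisj b α hb)
        rcases Nat.even_or_odd (I b).card with h | h
        · exact h.mul_right _
        · rcases Nat.even_or_odd (I α).card with h' | h'
          · exact h'.mul_left _
          · exact absurd (hodd b α h h') hb
      rw [← mul_assoc, hcomm, mul_assoc]
    rw [hqp]
    have hfa : ∀ a ∈ Finset.univ.erase α,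
        (∑ b : A, K a b • (ΓI n (I a) * (ΓI n (I b) * Γg n μ)))
          = K a α • (ΓI n (I a) * (ΓI n (I α) * Γg n μ)) := by
      intro a ha
      have haα := (Finset.mem_erase.mp ha).1
      apply Finset.sum_eq_single_of_mem α (Finset.mem_univ α)
      intro b _ hb
      have hz : K a b = 0 := by
        simp only [hK, hso a haα, hso b hb]; ring
      rw [hz, zero_smul]
    calc ∑ a : A, ∑ b : A, K a b • (ΓI n (I a) * (ΓI n (I b) * Γg n μ))
        = (∑ b : A, K α b • (ΓI n (I α) * (ΓI n (I b) * Γg n μ)))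
          + ∑ a ∈ Finset.univ.erase α, ∑ b : A,
              K a b • (ΓI n (I a) * (ΓI n (I b) * Γg n μ)) :=
          (Finset.add_sum_erase _ _ (Finset.mem_univ α)).symm
      _ = (K α α • (ΓI n (I α) * (ΓI n (I α) * Γg n μ))
          + ∑ b ∈ Finset.univ.erase α, K α b • (ΓI n (I α) * (ΓI n (I b) * Γg n μ)))
          + ∑ a ∈ Finset.univ.erase α, K a α • (ΓI n (I a) * (ΓI n (I α) * Γg n μ)) := by
          rw [(Finset.add_sum_erase _ _ (Finset.mem_univ α)).symm,
            Finset.sum_congr rfl hfa]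
      _ = K α α • (ΓI n (I α) * (ΓI n (I α) * Γg n μ))
          + ∑ a ∈ Finset.univ.erase α,
              (K α a • (ΓI n (I α) * (ΓI n (I a) * Γg n μ))
                + K a α • (ΓI n (I a) * (ΓI n (I α) * Γg n μ))) := by
          rw [Finset.sum_add_distrib, add_assoc]
      _ = K α α • (ΓI n (I α) * (ΓI n (I α) * Γg n μ)) + 0 := by
          congr 1
          refine Finset.sum_eq_zero fun a ha => ?_
          have haα := (Finset.mem_erase.mp ha).1
          rw [hXsymm a haα, ← add_smul]
          have hz : K α a + K a α = 0 := by
            simp only [hK, hsα, hso a haα]; ring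
          rw [hz, zero_smul]
      _ = (4 * σs (I α).card * c_ α ^ 2) • Γg n μ := by
          rw [add_zero, ← mul_assoc, ΓI_sq n (I α), smul_mul_assoc, one_mul, smul_smul]
          have hKαα : K α α = 4 * (c_ α * c_ α) := by
            simp only [hK, hsα]; ring
          rw [hKαα]
          congr 1
          ring
  · intro h0
    rw [hqp]
    refine Finset.sum_eq_zero fun a _ => Finset.sum_eq_zero fun b _ => ?_
    have hz : K a b = 0 := by
      simp only [hK, hs, sgn, if_neg (h0 a), if_neg (h0 b)]; ring
    rw [hz, zero_smul]
end
end

section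
/- Assume n is odd. For a, b ∈ Cℓ the following are equivalent: (1) s_{a,b}(ι(v)) ∈ ι(ℂⁿ) for every v ∈ ℂⁿ (the pair (a,b) is linear); (2) there exist α, β, γ ∈ ℂ and an element A in the ℂ-linear span of {Γ_iΓ_j : i ≠ j, i,j ∈ {1,…,n}} such that a = α·1 + A + γ·ω and b = β·1 + A + γ·ω, where ω := Γ_{{1,…,n}} = Γ_1Γ_2⋯Γ_n. (Characterization of linear pairs in odd dimension.) -/
noncomputable section

namespace Stmt5

variable {n : ℕ}

/-- toggle membership of `μ` in `I` -/
def tog (μ : Fin n) (I : Finset (Fin n)) : Finset (Fin n) :=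
  if μ ∈ I then I.erase μ else insert μ I

lemma tog_tog (μ : Fin n) (I : Finset (Fin n)) : tog μ (tog μ I) = I := by
  unfold tog
  by_cases h : μ ∈ I
  · simp [h, Finset.insert_erase h]
  · simp [h]

lemma tog_eq_iff {μ : Fin n} {I J : Finset (Fin n)} : tog μ I = J ↔ I = tog μ J := by
  constructor
  · rintro rfl; rw [tog_tog]
  · rintro rfl; rw [tog_tog]

lemma tog_empty (μ : Fin n) : tog μ (∅ : Finset (Fin n)) = {μ} := by simp [tog]

lemma neg_one_pow_card_tog (μ : Fin n) (I : Finset (Fin n)) :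
    (-1 : ℂ) ^ (tog μ I).card = -(-1 : ℂ) ^ I.card := by
  unfold tog
  by_cases h : μ ∈ I
  · rw [if_pos h, Finset.card_erase_of_mem h]
    have h1 : 1 ≤ I.card := Finset.card_pos.mpr ⟨μ, h⟩
    have h2 : (-1 : ℂ) ^ I.card = (-1) ^ (I.card - 1) * (-1) := by
      rw [← pow_succ]; congr 1; omega
    rw [h2]; ring
  · rw [if_neg h, Finset.card_insert_of_notMem h, pow_succ]; ring

lemma card_tog_of_mem {μ : Fin n} {I : Finset (Fin n)} (h : μ ∈ I) :
    (tog μ I).card = I.card - 1 := by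
  rw [tog, if_pos h, Finset.card_erase_of_mem h]

lemma card_tog_of_not_mem {μ : Fin n} {I : Finset (Fin n)} (h : μ ∉ I) :
    (tog μ I).card = I.card + 1 := by
  rw [tog, if_neg h, Finset.card_insert_of_notMem h]

lemma mem_tog_self_iff {μ : Fin n} {I : Finset (Fin n)} : μ ∈ tog μ I ↔ μ ∉ I := by
  unfold tog
  by_cases h : μ ∈ I <;> simp [h]

/-- general filter-toggle lemma -/
lemma filter_tog (p : Fin n → Prop) [DecidablePred p] (ν : Fin n) (I : Finset (Fin n)) :
    (tog ν I).filter p = if p ν then tog ν (I.filter p) else I.filter p := by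
  unfold tog
  by_cases h : ν ∈ I
  · rw [if_pos h, Finset.filter_erase]
    by_cases hp : p ν
    · rw [if_pos hp, if_pos (Finset.mem_filter.mpr ⟨h, hp⟩)]
    · rw [if_neg hp, Finset.erase_eq_of_notMem]
      simp [hp]
  · rw [if_neg h, Finset.filter_insert]
    by_cases hp : p ν
    · rw [if_pos hp, if_pos hp, if_neg (by simp [h])]
    · rw [if_neg hp, if_neg hp]

/-- left sign -/
def epsL (μ : Fin n) (I : Finset (Fin n)) : ℂ :=
  (-1) ^ (I.filter (· < μ)).card * (if μ ∈ I then -1 else 1)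

/-- right sign -/
def epsR (μ : Fin n) (I : Finset (Fin n)) : ℂ :=
  (-1) ^ (I.filter (μ < ·)).card * (if μ ∈ I then -1 else 1)

lemma neg_one_pow_mul_self (k : ℕ) : ((-1 : ℂ)) ^ k * (-1) ^ k = 1 := by
  rw [← pow_add, ← two_mul, pow_mul]; norm_num

lemma epsL_mul_self (μ : Fin n) (I : Finset (Fin n)) : epsL μ I * epsL μ I = 1 := by
  unfold epsL
  have := neg_one_pow_mul_self (I.filter (· < μ)).card
  by_cases h : μ ∈ I <;> simp [h] <;> linear_combination this

lemma epsR_mul_self (μ : Fin n) (I : Finset (Fin n)) : epsR μ I * epsR μ I = 1 := by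
  unfold epsR
  have := neg_one_pow_mul_self (I.filter (μ < ·)).card
  by_cases h : μ ∈ I <;> simp [h] <;> linear_combination this

lemma mem_tog_iff_of_ne {μ ν : Fin n} (hμν : μ ≠ ν) (I : Finset (Fin n)) :
    μ ∈ tog ν I ↔ μ ∈ I := by
  unfold tog
  by_cases h : ν ∈ I <;> simp [h, Finset.mem_erase, Finset.mem_insert, hμν]

lemma filter_lt_tog_self (μ : Fin n) (I : Finset (Fin n)) :
    (tog μ I).filter (· < μ) = I.filter (· < μ) := by
  rw [filter_tog, if_neg (lt_irrefl μ)]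

lemma filter_gt_tog_self (μ : Fin n) (I : Finset (Fin n)) :
    (tog μ I).filter (μ < ·) = I.filter (μ < ·) := by
  rw [filter_tog, if_neg (lt_irrefl μ)]

/-- L1 -/
lemma epsL_tog_self_mul (μ : Fin n) (I : Finset (Fin n)) :
    epsL μ (tog μ I) * epsL μ I = -1 := by
  unfold epsL
  rw [filter_lt_tog_self]
  by_cases h : μ ∈ I
  · rw [if_pos h, if_neg (by rw [mem_tog_self_iff]; exact fun h2 => h2 h)]
    have := neg_one_pow_mul_self (I.filter (· < μ)).card
    ring_nf
    ring_nf at this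
    rw [this]
  · rw [if_neg h, if_pos (mem_tog_self_iff.mpr h)]
    have := neg_one_pow_mul_self (I.filter (· < μ)).card
    ring_nf
    ring_nf at this
    rw [this]

/-- R1 -/
lemma epsR_tog_self_mul (μ : Fin n) (I : Finset (Fin n)) :
    epsR μ (tog μ I) * epsR μ I = -1 := by
  unfold epsR
  rw [filter_gt_tog_self]
  by_cases h : μ ∈ I
  · rw [if_pos h, if_neg (by rw [mem_tog_self_iff]; exact fun h2 => h2 h)]
    have := neg_one_pow_mul_self (I.filter (μ < ·)).card
    ring_nf; ring_nf at this; rw [this]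
  · rw [if_neg h, if_pos (mem_tog_self_iff.mpr h)]
    have := neg_one_pow_mul_self (I.filter (μ < ·)).card
    ring_nf; ring_nf at this; rw [this]

/-- L2 -/
lemma epsL_tog (μ ν : Fin n) (hne : ν ≠ μ) (I : Finset (Fin n)) :
    epsL μ (tog ν I) = (if ν < μ then -1 else 1) * epsL μ I := by
  unfold epsL
  rw [filter_tog]
  simp only [mem_tog_iff_of_ne (Ne.symm hne)]
  by_cases hlt : ν < μ
  · rw [if_pos hlt, if_pos hlt, neg_one_pow_card_tog]; ring
  · rw [if_neg hlt, if_neg hlt, one_mul]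

/-- R2 -/
lemma epsR_tog (μ ν : Fin n) (hne : ν ≠ μ) (I : Finset (Fin n)) :
    epsR μ (tog ν I) = (if μ < ν then -1 else 1) * epsR μ I := by
  unfold epsR
  rw [filter_tog]
  simp only [mem_tog_iff_of_ne (Ne.symm hne)]
  by_cases hlt : μ < ν
  · rw [if_pos hlt, if_pos hlt, neg_one_pow_card_tog]; ring
  · rw [if_neg hlt, if_neg hlt, one_mul]

end Stmt5

namespace Part2

variable {n : ℕ}
open Stmt5

lemma filter_card_partition (μ : Fin n) (I : Finset (Fin n)) :
    (I.filter (· < μ)).card + (I.filter (μ < ·)).card + (if μ ∈ I then 1 else 0) = I.card := by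
  have h1 : I.filter (fun x => ¬ x < μ) = I.filter (μ < ·) ∪ I.filter (· = μ) := by
    rw [← Finset.filter_or]
    apply Finset.filter_congr
    intro x _
    constructor
    · intro h; rcases lt_or_eq_of_le (not_lt.mp h) with h' | h'
      · exact Or.inl h'
      · exact Or.inr h'.symm
    · rintro (h | rfl)
      · exact not_lt.mpr (le_of_lt h)
      · exact lt_irrefl _
  have hdisj : Disjoint (I.filter (μ < ·)) (I.filter (· = μ)) := by
    rw [Finset.disjoint_left]
    intro x hx hy
    rw [Finset.mem_filter] at hx hy
    exact absurd hx.2 (by rw [hy.2]; exact lt_irrefl _)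
  have h2 := Finset.card_filter_add_card_filter_not (s := I) (p := (· < μ))
  rw [h1, Finset.card_union_of_disjoint hdisj, Finset.filter_eq'] at h2
  by_cases h : μ ∈ I
  · simp only [h, if_true, Finset.card_singleton] at h2 ⊢; omega
  · simp only [h, if_false, Finset.card_empty] at h2 ⊢; omega

/-- εR μ J * εL μ J = (−1)^(card − [μ∈J]) -/
lemma epsR_mul_epsL (μ : Fin n) (I : Finset (Fin n)) :
    epsR μ I * epsL μ I =
      (-1 : ℂ) ^ ((I.filter (· < μ)).card + (I.filter (μ < ·)).card) := by
  unfold epsL epsR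
  have := neg_one_pow_mul_self 1
  by_cases h : μ ∈ I <;> simp [h, pow_add] <;> ring

/-- if μ ∈ I and card even, or μ ∉ I and card odd, then εR = −εL; else εR = εL.
    Stated via: εR = (−1)^(card + [μ∈I]+1? ) ... we state the two use cases directly. -/
lemma epsR_eq_epsL_of_even (μ : Fin n) (I : Finset (Fin n))
    (h : Even ((I.filter (· < μ)).card + (I.filter (μ < ·)).card)) :
    epsR μ I = epsL μ I := by
  have h1 := epsR_mul_epsL μ I
  rw [Even.neg_one_pow h] at h1
  have h2 := epsL_mul_self μ I
  calc epsR μ I = epsR μ I * (epsL μ I * epsL μ I) := by rw [h2, mul_one]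
  _ = (epsR μ I * epsL μ I) * epsL μ I := by ring
  _ = epsL μ I := by rw [h1, one_mul]

lemma epsR_eq_neg_epsL_of_odd (μ : Fin n) (I : Finset (Fin n))
    (h : Odd ((I.filter (· < μ)).card + (I.filter (μ < ·)).card)) :
    epsR μ I = -epsL μ I := by
  have h1 := epsR_mul_epsL μ I
  rw [Odd.neg_one_pow h] at h1
  have h2 := epsL_mul_self μ I
  calc epsR μ I = epsR μ I * (epsL μ I * epsL μ I) := by rw [h2, mul_one]
  _ = (epsR μ I * epsL μ I) * epsL μ I := by ring
  _ = -epsL μ I := by rw [h1]; ring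

end Part2

namespace Part3

open Stmt5 Part2

variable {n : ℕ}

/-- the model space -/
abbrev Mo (n : ℕ) := Finset (Fin n) → ℂ

/-- left generator operator -/
def cop (μ : Fin n) : Module.End ℂ (Mo n) where
  toFun x := fun I => epsL μ (tog μ I) * x (tog μ I)
  map_add' x y := by funext I; simp; ring
  map_smul' r x := by funext I; simp; ring

/-- right generator operator -/
def dop (μ : Fin n) : Module.End ℂ (Mo n) where
  toFun x := fun I => epsR μ (tog μ I) * x (tog μ I)
  map_add' x y := by funext I; simp; ring
  map_smul' r x := by funext I; simp; ring

lemma cop_apply (μ : Fin n) (x : Mo n) (I : Finset (Fin n)) :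
    cop μ x I = epsL μ (tog μ I) * x (tog μ I) := rfl

lemma dop_apply (μ : Fin n) (x : Mo n) (I : Finset (Fin n)) :
    dop μ x I = epsR μ (tog μ I) * x (tog μ I) := rfl

lemma cop_single (μ : Fin n) (J : Finset (Fin n)) (e : ℂ) :
    cop μ (Pi.single J e) = Pi.single (tog μ J) (epsL μ J * e) := by
  funext I
  rw [cop_apply]
  by_cases h : I = tog μ J
  · subst h
    rw [tog_tog, Pi.single_eq_same, Pi.single_eq_same]
  · rw [Pi.single_eq_of_ne h, Pi.single_eq_of_ne, mul_zero]
    intro h2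
    exact h (by rw [← h2, tog_tog])

lemma dop_single (μ : Fin n) (J : Finset (Fin n)) (e : ℂ) :
    dop μ (Pi.single J e) = Pi.single (tog μ J) (epsR μ J * e) := by
  funext I
  rw [dop_apply]
  by_cases h : I = tog μ J
  · subst h
    rw [tog_tog, Pi.single_eq_same, Pi.single_eq_same]
  · rw [Pi.single_eq_of_ne h, Pi.single_eq_of_ne, mul_zero]
    intro h2
    exact h (by rw [← h2, tog_tog])

lemma mem_tog (x μ : Fin n) (I : Finset (Fin n)) :
    x ∈ tog μ I ↔ (if x = μ then μ ∉ I else x ∈ I) := by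
  unfold tog
  by_cases h : μ ∈ I <;> by_cases hx : x = μ <;>
    simp [h, hx, Finset.mem_erase, Finset.mem_insert]

lemma tog_comm (μ ν : Fin n) (I : Finset (Fin n)) : tog μ (tog ν I) = tog ν (tog μ I) := by
  by_cases h : μ = ν
  · subst h; rfl
  · ext x
    simp only [mem_tog]
    by_cases h1 : x = μ <;> by_cases h2 : x = ν <;>
      simp [h1, h2, h, Ne.symm h] <;> try (exfalso; exact h (h1 ▸ h2 ▸ rfl))

lemma epsL_tog_self' (μ : Fin n) (I : Finset (Fin n)) : epsL μ (tog μ I) = -epsL μ I := by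
  have h1 := epsL_tog_self_mul μ I
  have h2 := epsL_mul_self μ I
  calc epsL μ (tog μ I) = epsL μ (tog μ I) * (epsL μ I * epsL μ I) := by rw [h2, mul_one]
  _ = (epsL μ (tog μ I) * epsL μ I) * epsL μ I := by ring
  _ = -epsL μ I := by rw [h1]; ring

lemma epsR_tog_self' (μ : Fin n) (I : Finset (Fin n)) : epsR μ (tog μ I) = -epsR μ I := by
  have h1 := epsR_tog_self_mul μ I
  have h2 := epsR_mul_self μ I
  calc epsR μ (tog μ I) = epsR μ (tog μ I) * (epsR μ I * epsR μ I) := by rw [h2, mul_one]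
  _ = (epsR μ (tog μ I) * epsR μ I) * epsR μ I := by ring
  _ = -epsR μ I := by rw [h1]; ring

/-- cμ² = −1 -/
lemma cop_sq (μ : Fin n) : cop μ * cop μ = -1 := by
  apply LinearMap.ext
  intro x
  funext I
  simp only [Module.End.mul_apply, cop_apply, tog_tog, LinearMap.neg_apply, Module.End.one_apply,
    Pi.neg_apply]
  rw [← mul_assoc, epsL_tog_self_mul]; ring

lemma cop_anticomm {μ ν : Fin n} (h : μ ≠ ν) : cop μ * cop ν = -(cop ν * cop μ) := by
  apply LinearMap.ext
  intro x
  funext I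
  simp only [Module.End.mul_apply, cop_apply, LinearMap.neg_apply, Pi.neg_apply]
  have hA : tog ν (tog μ I) = tog μ (tog ν I) := tog_comm ν μ I
  have e1 : epsL ν (tog μ (tog ν I)) = (if μ < ν then -1 else 1) * epsL ν (tog ν I) :=
    epsL_tog ν μ h (tog ν I)
  have e2 : epsL μ (tog μ (tog ν I)) = (if ν < μ then -1 else 1) * epsL μ (tog μ I) := by
    rw [← hA]; exact epsL_tog μ ν (Ne.symm h) (tog μ I)
  rw [hA, e1, e2]
  rcases lt_or_gt_of_ne h with hlt | hlt
  · rw [if_pos hlt, if_neg (asymm hlt)]; ring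
  · rw [if_neg (asymm hlt), if_pos hlt]; ring

lemma cop_dop_comm (μ ν : Fin n) : cop ν * dop μ = dop μ * cop ν := by
  apply LinearMap.ext
  intro x
  funext I
  simp only [Module.End.mul_apply, cop_apply, dop_apply]
  by_cases h : μ = ν
  · subst h
    rw [tog_tog, epsL_tog_self', epsR_tog_self']
    ring
  · have hA : tog μ (tog ν I) = tog ν (tog μ I) := tog_comm μ ν I
    have e1 : epsR μ (tog μ (tog ν I)) = (if μ < ν then -1 else 1) * epsR μ (tog μ I) := by
      rw [hA]; exact epsR_tog μ ν (fun hh => h hh.symm) (tog μ I)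
    have e2 : epsL ν (tog ν (tog μ I)) = (if μ < ν then -1 else 1) * epsL ν (tog ν I) := by
      rw [← hA]; exact epsL_tog ν μ h (tog ν I)
    rw [e1, e2, hA]
    ring

end Part3

namespace Part4

open Stmt5 Part2 Part3

variable {n : ℕ}

lemma Qf_apply (n : ℕ) (v : Fin n → ℂ) : Qf n v = -∑ μ, v μ * v μ := by
  rw [Qf, QuadraticMap.weightedSumSquares_apply, ← Finset.sum_neg_distrib]
  exact Finset.sum_congr rfl fun μ _ => by simp

/-- the representation map on generators -/
def F (n : ℕ) : (Fin n → ℂ) →ₗ[ℂ] Module.End ℂ (Mo n) :=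
  ∑ μ : Fin n, LinearMap.smulRight (LinearMap.proj μ) (cop μ)

lemma F_apply (v : Fin n → ℂ) : F n v = ∑ μ, v μ • cop μ := by
  rw [F, LinearMap.sum_apply]
  exact Finset.sum_congr rfl fun μ _ => rfl

lemma F_single (μ : Fin n) : F n (Pi.single μ 1) = cop μ := by
  rw [F_apply]
  rw [Finset.sum_eq_single μ]
  · simp
  · intro ν _ hν
    rw [Pi.single_eq_of_ne hν, zero_smul]
  · intro h; exact absurd (Finset.mem_univ μ) h

lemma F_cond (v : Fin n → ℂ) :
    F n v * F n v = algebraMap ℂ (Module.End ℂ (Mo n)) (Qf n v) := by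
  have key : (2 : ℂ) • (F n v * F n v) = (2 : ℂ) • ((- ∑ μ, v μ * v μ) • (1 : Module.End ℂ (Mo n))) := by
    have expand : F n v * F n v =
        ∑ μ, ∑ ν, (v μ * v ν) • (cop μ * cop ν) := by
      rw [F_apply, Finset.sum_mul_sum]
      exact Finset.sum_congr rfl fun μ _ => Finset.sum_congr rfl fun ν _ => by
        rw [smul_mul_smul_comm]
    have expand' : F n v * F n v =
        ∑ μ, ∑ ν, (v μ * v ν) • (cop ν * cop μ) := by
      rw [expand, Finset.sum_comm]
      exact Finset.sum_congr rfl fun ν _ => Finset.sum_congr rfl fun μ _ => by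
        rw [mul_comm (v ν) (v μ)]
    calc (2:ℂ) • (F n v * F n v) = F n v * F n v + F n v * F n v := two_smul ℂ _
    _ = ∑ μ, ∑ ν, ((v μ * v ν) • (cop μ * cop ν) + (v μ * v ν) • (cop ν * cop μ)) := by
        nth_rewrite 2 [expand']
        rw [expand]
        rw [← Finset.sum_add_distrib]
        exact Finset.sum_congr rfl fun μ _ => (Finset.sum_add_distrib).symm
    _ = ∑ μ, ∑ ν, (if μ = ν then (v μ * v ν) • ((-2 : ℂ) • (1:Module.End ℂ (Mo n))) else 0) := by
        refine Finset.sum_congr rfl fun μ _ => Finset.sum_congr rfl fun ν _ => ?_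
        by_cases h : μ = ν
        · subst h
          rw [if_pos rfl, ← smul_add, cop_sq]
          congr 1
          ext x
          simp [two_smul]
        · rw [if_neg h, cop_anticomm h, ← smul_add]
          simp
    _ = ∑ μ, (v μ * v μ) • ((-2 : ℂ) • (1:Module.End ℂ (Mo n))) := by
        refine Finset.sum_congr rfl fun μ _ => ?_
        simp
    _ = (2:ℂ) • ((- ∑ μ, v μ * v μ) • (1 : Module.End ℂ (Mo n))) := by
        rw [← Finset.sum_smul, smul_smul, smul_smul]
        congr 1
        ring
  have h2 : (2 : ℂ) ≠ 0 := two_ne_zero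
  have := smul_right_injective (Module.End ℂ (Mo n)) h2 key
  rw [this, Qf_apply, Algebra.algebraMap_eq_smul_one]

end Part4

namespace Part5

open Stmt5 Part2 Part3 Part4

variable {n : ℕ}

/-- the representation -/
def ρ (n : ℕ) : Cl n →ₐ[ℂ] Module.End ℂ (Mo n) :=
  CliffordAlgebra.lift (Qf n) ⟨F n, F_cond⟩

lemma ρ_emb (v : Fin n → ℂ) : ρ n (emb n v) = F n v :=
  CliffordAlgebra.lift_ι_apply _ _ v

lemma ρ_Γg (μ : Fin n) : ρ n (Γg n μ) = cop μ := by
  rw [Γg, ρ_emb, F_single]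

/-- the basis delta vectors in the model -/
def δ (J : Finset (Fin n)) : Mo n := Pi.single J 1

/-- the coordinate map -/
def Φ (n : ℕ) : Cl n →ₗ[ℂ] Mo n where
  toFun x := ρ n x (δ ∅)
  map_add' x y := by simp
  map_smul' r x := by simp

lemma Φ_apply (x : Cl n) : Φ n x = ρ n x (δ ∅) := rfl

lemma Φ_one : Φ n (1 : Cl n) = δ (∅ : Finset (Fin n)) := by
  rw [Φ_apply, map_one, Module.End.one_apply]

lemma Φ_algebraMap (r : ℂ) : Φ n (algebraMap ℂ (Cl n) r) = r • δ (∅ : Finset (Fin n)) := by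
  rw [Φ_apply, AlgHom.commutes, Algebra.algebraMap_eq_smul_one, LinearMap.smul_apply,
    Module.End.one_apply]

lemma Φ_Γg_mul (μ : Fin n) (x : Cl n) : Φ n (Γg n μ * x) = cop μ (Φ n x) := by
  rw [Φ_apply, Φ_apply, map_mul, ρ_Γg, Module.End.mul_apply]

lemma dop_comm_ρ (μ : Fin n) (x : Cl n) : ρ n x * dop μ = dop μ * ρ n x := by
  induction x using CliffordAlgebra.induction with
  | algebraMap r =>
      rw [AlgHom.commutes, Algebra.algebraMap_eq_smul_one]
      ext y
      simp
  | ι v =>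
      have hv : (CliffordAlgebra.ι (Qf n)) v = emb n v := rfl
      rw [hv, ρ_emb, F_apply, Finset.sum_mul, Finset.mul_sum]
      exact Finset.sum_congr rfl fun ν _ => by
        rw [smul_mul_assoc, mul_smul_comm, cop_dop_comm]
  | mul a b ha hb => rw [map_mul, mul_assoc, hb, ← mul_assoc, ha, mul_assoc]
  | add a b ha hb => rw [map_add, add_mul, mul_add, ha, hb]

lemma Φ_mul_Γg (μ : Fin n) (x : Cl n) : Φ n (x * Γg n μ) = dop μ (Φ n x) := by
  rw [Φ_apply, Φ_apply, map_mul, ρ_Γg]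
  have h1 : cop μ (δ (∅ : Finset (Fin n))) = dop μ (δ (∅ : Finset (Fin n))) := by
    rw [δ, cop_single, dop_single]
    unfold epsL epsR
    simp
  rw [Module.End.mul_apply, h1, ← Module.End.mul_apply, ← Module.End.mul_apply, dop_comm_ρ]

lemma ΓI_empty : ΓI n ∅ = 1 := by
  rw [ΓI, Finset.sort_empty]
  rfl

lemma ΓI_insert {μ : Fin n} {J : Finset (Fin n)} (h : ∀ ν ∈ J, μ < ν) :
    ΓI n (insert μ J) = Γg n μ * ΓI n J := by
  have hμJ : μ ∉ J := fun hm => lt_irrefl μ (h μ hm)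
  have hs : Finset.sort (insert μ J) (· ≤ ·) = μ :: Finset.sort J (· ≤ ·) :=
    Finset.sort_insert (r := (· ≤ ·)) (fun ν hν => le_of_lt (h ν hν)) hμJ
  rw [ΓI, ΓI, hs, List.map_cons, List.prod_cons]

lemma ΓI_singleton (μ : Fin n) : ΓI n {μ} = Γg n μ := by
  have h0 : ({μ} : Finset (Fin n)) = insert μ ∅ := rfl
  rw [h0, ΓI_insert (by simp), ΓI_empty, mul_one]

lemma Γg_eq_ι (μ : Fin n) : Γg n μ = CliffordAlgebra.ι (Qf n) (Pi.single μ 1) := rfl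

lemma Γg_mul_self (μ : Fin n) : Γg n μ * Γg n μ = -1 := by
  rw [Γg_eq_ι, CliffordAlgebra.ι_sq_scalar, Qf_apply]
  have h1 : ∑ ν : Fin n, (Pi.single μ 1 : Fin n → ℂ) ν * (Pi.single μ 1 : Fin n → ℂ) ν = 1 := by
    rw [Finset.sum_eq_single μ]
    · simp
    · intro ν _ hν; rw [Pi.single_eq_of_ne hν, zero_mul]
    · intro h; exact absurd (Finset.mem_univ μ) h
  rw [h1, map_neg, map_one]

lemma Qf_polar (a b : Fin n → ℂ) :
    QuadraticMap.polar (Qf n) a b = -2 * ∑ μ, a μ * b μ := by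
  rw [QuadraticMap.polar, Qf_apply, Qf_apply, Qf_apply]
  simp only [Pi.add_apply]
  have h : ∀ μ ∈ Finset.univ, (a μ + b μ) * (a μ + b μ) =
      (a μ * a μ + b μ * b μ) + 2 * (a μ * b μ) := fun μ _ => by ring
  rw [Finset.sum_congr rfl h, Finset.sum_add_distrib, Finset.sum_add_distrib, ← Finset.mul_sum]
  ring

lemma Γg_anticomm {μ ν : Fin n} (h : μ ≠ ν) : Γg n μ * Γg n ν = -(Γg n ν * Γg n μ) := by
  have key := CliffordAlgebra.ι_mul_ι_add_swap (Q := Qf n) (Pi.single μ (1:ℂ)) (Pi.single ν 1)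
  rw [Qf_polar] at key
  have hz : ∑ x : Fin n, (Pi.single μ 1 : Fin n → ℂ) x * (Pi.single ν 1 : Fin n → ℂ) x = 0 := by
    apply Finset.sum_eq_zero
    intro x _
    by_cases h1 : x = μ
    · subst h1
      rw [Pi.single_eq_of_ne h, mul_zero]
    · rw [Pi.single_eq_of_ne h1, zero_mul]
  rw [hz, mul_zero, map_zero] at key
  rw [Γg_eq_ι, Γg_eq_ι]
  exact eq_neg_of_add_eq_zero_left key

end Part5

namespace Part6

open Stmt5 Part2 Part3 Part4 Part5

variable {n : ℕ}

lemma Γg_mul_ΓI (μ : Fin n) (J : Finset (Fin n)) :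
    Γg n μ * ΓI n J = epsL μ J • ΓI n (tog μ J) := by
  induction J using Finset.strongInduction with
  | _ J ih =>
  by_cases hJ : J = ∅
  · subst hJ
    rw [ΓI_empty, mul_one, tog_empty, ΓI_singleton]
    unfold epsL
    simp
  · have hne : J.Nonempty := Finset.nonempty_iff_ne_empty.mpr hJ
    have hmJ : J.min' hne ∈ J := J.min'_mem hne
    set m := J.min' hne with hm
    have hlt : ∀ ν ∈ J.erase m, m < ν := fun ν hν => by
      rcases Finset.mem_erase.mp hν with ⟨hne', hνJ⟩
      exact lt_of_le_of_ne (J.min'_le ν hνJ) (Ne.symm hne')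
    have hdecomp : J = insert m (J.erase m) := (Finset.insert_erase hmJ).symm
    have hJ' : ΓI n J = Γg n m * ΓI n (J.erase m) := by
      conv_lhs => rw [hdecomp]
      exact ΓI_insert hlt
    rcases lt_trichotomy μ m with hc | hc | hc
    · -- μ < m
      have hμJ : μ ∉ J := fun hmem => absurd (J.min'_le μ hmem) (not_le.mpr hc)
      have h1 : tog μ J = insert μ J := by rw [tog, if_neg hμJ]
      have h2 : ∀ ν ∈ J, μ < ν := fun ν hν => lt_of_lt_of_le hc (J.min'_le ν hν)
      rw [h1, ΓI_insert h2]
      have h3 : epsL μ J = 1 := by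
        unfold epsL
        rw [if_neg hμJ, mul_one]
        have h4 : J.filter (· < μ) = ∅ :=
          Finset.filter_eq_empty_iff.mpr (fun {x} hx => not_lt.mpr (le_of_lt (h2 x hx)))
        rw [h4]
        simp
      rw [h3, one_smul]
    · -- μ = m
      subst hc
      rw [hJ', ← mul_assoc, Γg_mul_self]
      have hεL : epsL m J = -1 := by
        unfold epsL
        rw [if_pos hmJ]
        have h4 : J.filter (· < m) = ∅ :=
          Finset.filter_eq_empty_iff.mpr (fun {x} hx => not_lt.mpr (J.min'_le x hx))
        rw [h4]
        simp
      have htog : tog m J = J.erase m := by rw [tog, if_pos hmJ]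
      rw [hεL, htog, neg_one_smul, neg_one_mul]
    · -- m < μ
      have hμm : μ ≠ m := ne_of_gt hc
      rw [hJ', ← mul_assoc, Γg_anticomm hμm, neg_mul, mul_assoc,
        ih (J.erase m) (Finset.erase_ssubset hmJ), mul_smul_comm]
      have hm_lt : ∀ ν ∈ tog μ (J.erase m), m < ν := by
        intro ν hν
        rw [mem_tog] at hν
        by_cases hνμ : ν = μ
        · subst hνμ; exact hc
        · rw [if_neg hνμ] at hν
          exact hlt ν hν
      rw [← ΓI_insert hm_lt]
      have hins : insert m (tog μ (J.erase m)) = tog μ J := by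
        ext x
        rw [Finset.mem_insert, mem_tog, mem_tog]
        by_cases hxμ : x = μ
        · subst hxμ
          rw [if_pos rfl, if_pos rfl]
          constructor
          · rintro (h | h)
            · exact absurd h hμm
            · intro hxJ; exact h (Finset.mem_erase.mpr ⟨hμm, hxJ⟩)
          · intro h
            right
            intro hmem
            exact h (Finset.mem_erase.mp hmem).2
        · rw [if_neg hxμ, if_neg hxμ, Finset.mem_erase]
          constructor
          · rintro (rfl | ⟨_, h⟩)
            · exact hmJ
            · exact h
          · intro hxJ
            by_cases hxm : x = m
            · exact Or.inl hxm
            · exact Or.inr ⟨hxm, hxJ⟩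
      have hsign : epsL μ J = -epsL μ (J.erase m) := by
        have h5 : J.erase m = tog m J := by rw [tog, if_pos hmJ]
        rw [h5, epsL_tog μ m (Ne.symm hμm), if_pos hc]
        ring
      rw [hins, hsign, neg_smul]

end Part6

namespace Part7

open Stmt5 Part2 Part3 Part4 Part5 Part6

variable {n : ℕ}

lemma min_decomp {J : Finset (Fin n)} (hne : J.Nonempty) :
    ΓI n J = Γg n (J.min' hne) * ΓI n (J.erase (J.min' hne)) := by
  have hmJ : J.min' hne ∈ J := J.min'_mem hne
  have hlt : ∀ ν ∈ J.erase (J.min' hne), J.min' hne < ν := fun ν hν => by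
    rcases Finset.mem_erase.mp hν with ⟨hne', hνJ⟩
    exact lt_of_le_of_ne (J.min'_le ν hνJ) (Ne.symm hne')
  conv_lhs => rw [← Finset.insert_erase hmJ]
  exact ΓI_insert hlt

lemma Φ_ΓI (J : Finset (Fin n)) : Φ n (ΓI n J) = δ J := by
  induction J using Finset.strongInduction with
  | _ J ih =>
  by_cases hJ : J = ∅
  · subst hJ; rw [ΓI_empty, Φ_one]
  · have hne : J.Nonempty := Finset.nonempty_iff_ne_empty.mpr hJ
    have hmJ : J.min' hne ∈ J := J.min'_mem hne
    set m := J.min' hne with hm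
    rw [min_decomp hne, Φ_Γg_mul, ih (J.erase m) (Finset.erase_ssubset hmJ), δ, cop_single]
    have h1 : tog m (J.erase m) = J := by
      rw [tog, if_neg (Finset.notMem_erase m J), Finset.insert_erase hmJ]
    have h2 : epsL m (J.erase m) = 1 := by
      unfold epsL
      rw [if_neg (Finset.notMem_erase m J), mul_one]
      have h4 : (J.erase m).filter (· < m) = ∅ :=
        Finset.filter_eq_empty_iff.mpr (fun {x} hx => not_lt.mpr
          (J.min'_le x (Finset.mem_of_mem_erase hx)))
      rw [h4]
      simp
    rw [h1, h2, δ, mul_one]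

lemma emb_eq_sum (v : Fin n → ℂ) : emb n v = ∑ μ, v μ • Γg n μ := by
  have h1 : v = ∑ μ, Pi.single μ (v μ) := (Finset.univ_sum_single v).symm
  conv_lhs => rw [h1]
  rw [map_sum]
  refine Finset.sum_congr rfl fun μ _ => ?_
  have h2 : Pi.single μ (v μ) = v μ • (Pi.single μ 1 : Fin n → ℂ) := by
    rw [← Pi.single_smul, smul_eq_mul, mul_one]
  rw [h2, map_smul, Γg]

/-- the span of the ΓI -/
def N (n : ℕ) : Submodule ℂ (Cl n) := Submodule.span ℂ (Set.range (ΓI n))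

lemma Γg_mul_mem {μ : Fin n} {y : Cl n} (hy : y ∈ N n) : Γg n μ * y ∈ N n := by
  induction hy using Submodule.span_induction with
  | mem x hx =>
      rcases hx with ⟨J, rfl⟩
      rw [Γg_mul_ΓI]
      exact Submodule.smul_mem _ _ (Submodule.subset_span ⟨tog μ J, rfl⟩)
  | zero => rw [mul_zero]; exact (N n).zero_mem
  | add x y _ _ hx hy => rw [mul_add]; exact (N n).add_mem hx hy
  | smul r x _ hx => rw [mul_smul_comm]; exact (N n).smul_mem r hx

lemma emb_mul_mem (v : Fin n → ℂ) {y : Cl n} (hy : y ∈ N n) : emb n v * y ∈ N n := by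
  rw [emb_eq_sum, Finset.sum_mul]
  refine (N n).sum_mem fun μ _ => ?_
  rw [smul_mul_assoc]
  exact (N n).smul_mem _ (Γg_mul_mem hy)

lemma mem_N (x : Cl n) : x ∈ N n := by
  have key : ∀ y ∈ N n, x * y ∈ N n := by
    induction x using CliffordAlgebra.induction with
    | algebraMap r =>
        intro y hy
        rw [← Algebra.smul_def]
        exact (N n).smul_mem r hy
    | ι v => intro y hy; exact emb_mul_mem v hy
    | mul a b ha hb => intro y hy; rw [mul_assoc]; exact ha _ (hb _ hy)
    | add a b ha hb => intro y hy; rw [add_mul]; exact (N n).add_mem (ha _ hy) (hb _ hy)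
  have h1 : (1 : Cl n) ∈ N n := by
    rw [← ΓI_empty]
    exact Submodule.subset_span ⟨∅, rfl⟩
  have := key 1 h1
  rwa [mul_one] at this

/-- reconstruction map -/
def Ψ (n : ℕ) : Mo n →ₗ[ℂ] Cl n :=
  ∑ I : Finset (Fin n), LinearMap.smulRight (LinearMap.proj I) (ΓI n I)

lemma Ψ_apply (x : Mo n) : Ψ n x = ∑ I : Finset (Fin n), x I • ΓI n I := by
  rw [Ψ, LinearMap.sum_apply]
  exact Finset.sum_congr rfl fun I _ => rfl

lemma Ψ_δ (J : Finset (Fin n)) : Ψ n (δ J) = ΓI n J := by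
  rw [Ψ_apply, Finset.sum_eq_single J]
  · rw [δ, Pi.single_eq_same, one_smul]
  · intro I _ hI
    rw [δ, Pi.single_eq_of_ne hI, zero_smul]
  · intro h; exact absurd (Finset.mem_univ J) h

lemma ΨΦ (x : Cl n) : Ψ n (Φ n x) = x := by
  have hspan : Submodule.span ℂ (Set.range (ΓI n)) = ⊤ := by
    rw [eq_top_iff]
    exact fun x _ => mem_N x
  have h : (Ψ n).comp (Φ n) = LinearMap.id := by
    apply LinearMap.ext_on hspan
    rintro x ⟨J, rfl⟩
    rw [LinearMap.comp_apply, Φ_ΓI, Ψ_δ, LinearMap.id_apply]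
  exact DFunLike.congr_fun h x

lemma Φ_injective : Function.Injective (Φ n) := by
  intro x y h
  have := congrArg (Ψ n) h
  rwa [ΨΦ, ΨΦ] at this

lemma Φ_emb (v : Fin n → ℂ) (I : Finset (Fin n)) :
    Φ n (emb n v) I = ∑ μ, v μ * δ ({μ} : Finset (Fin n)) I := by
  rw [emb_eq_sum, map_sum, Finset.sum_apply]
  refine Finset.sum_congr rfl fun μ _ => ?_
  rw [map_smul, ← ΓI_singleton, Φ_ΓI]
  rfl

lemma mem_range_emb_iff {x : Cl n} :
    x ∈ Set.range (emb n) ↔ ∀ I : Finset (Fin n), I.card ≠ 1 → Φ n x I = 0 := by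
  constructor
  · rintro ⟨v, rfl⟩ I hI
    rw [Φ_emb]
    apply Finset.sum_eq_zero
    intro μ _
    rw [δ, Pi.single_eq_of_ne, mul_zero]
    intro h
    rw [h] at hI
    exact hI (Finset.card_singleton μ)
  · intro h
    refine ⟨fun μ => Φ n x {μ}, Φ_injective ?_⟩
    funext I
    rw [Φ_emb]
    by_cases hI : I.card = 1
    · rcases Finset.card_eq_one.mp hI with ⟨μ, rfl⟩
      rw [Finset.sum_eq_single μ]
      · rw [δ, Pi.single_eq_same, mul_one]
      · intro ν _ hν
        rw [δ, Pi.single_eq_of_ne, mul_zero]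
        intro hh
        exact hν (Finset.singleton_injective hh.symm)
      · intro h; exact absurd (Finset.mem_univ μ) h
    · rw [h I hI]
      apply Finset.sum_eq_zero
      intro μ _
      rw [δ, Pi.single_eq_of_ne, mul_zero]
      intro hh
      rw [hh] at hI
      exact hI (Finset.card_singleton μ)

end Part7

namespace Part8

open Stmt5 Part2 Part3 Part4 Part5 Part6 Part7

variable {n : ℕ}

lemma hRL_even {a b : Cl n} {μ : Fin n} {J : Finset (Fin n)}
    (h : epsR μ J * Φ n a J = epsL μ J * Φ n b J)
    (h2 : Even ((J.filter (· < μ)).card + (J.filter (μ < ·)).card)) :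
    Φ n a J = Φ n b J := by
  rw [epsR_eq_epsL_of_even μ J h2] at h
  have hsq := epsL_mul_self μ J
  linear_combination (epsL μ J) * h - (Φ n a J - Φ n b J) * hsq

lemma hRL_odd {a b : Cl n} {μ : Fin n} {J : Finset (Fin n)}
    (h : epsR μ J * Φ n a J = epsL μ J * Φ n b J)
    (h2 : Odd ((J.filter (· < μ)).card + (J.filter (μ < ·)).card)) :
    Φ n a J = -Φ n b J := by
  rw [epsR_eq_neg_epsL_of_odd μ J h2] at h
  have hsq := epsL_mul_self μ J
  linear_combination (-(epsL μ J)) * h - (Φ n a J + Φ n b J) * hsq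

lemma exists_not_mem {J : Finset (Fin n)} (hJ : J.card ≠ n) : ∃ μ, μ ∉ J := by
  by_contra hc
  push_neg at hc
  have h1 : J = Finset.univ := Finset.eq_univ_iff_forall.mpr hc
  rw [h1, Finset.card_univ, Fintype.card_fin] at hJ
  exact hJ rfl

lemma ΓI_pair {J : Finset (Fin n)} (hJ : J.card = 2) :
    ∃ i j : Fin n, i ≠ j ∧ ΓI n J = Γg n i * Γg n j := by
  rcases Finset.card_eq_two.mp hJ with ⟨x, y, hxy, rfl⟩
  have key : ∀ i j : Fin n, i < j → ΓI n ({i, j} : Finset (Fin n)) = Γg n i * Γg n j := by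
    intro i j hij
    have h1 : ∀ ν ∈ ({j} : Finset (Fin n)), i < ν := by
      intro ν hν
      rw [Finset.mem_singleton] at hν
      subst hν; exact hij
    rw [show ({i, j} : Finset (Fin n)) = insert i {j} from rfl, ΓI_insert h1, ΓI_singleton]
  rcases lt_or_gt_of_ne hxy with h | h
  · exact ⟨x, y, hxy, key x y h⟩
  · refine ⟨y, x, Ne.symm hxy, ?_⟩
    rw [show ({x, y} : Finset (Fin n)) = {y, x} from Finset.pair_comm x y]
    exact key y x h

/-- Φ of the degree-2 span vanishes off card-2 sets -/
lemma Φ_span2 {A : Cl n}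
    (hA : A ∈ Submodule.span ℂ {x : Cl n | ∃ i j : Fin n, i ≠ j ∧ x = Γg n i * Γg n j})
    {K : Finset (Fin n)} (hK : K.card ≠ 2) : Φ n A K = 0 := by
  induction hA using Submodule.span_induction with
  | mem x hx =>
      rcases hx with ⟨i, j, hij, rfl⟩
      have h1 : Γg n i * Γg n j = epsL i ({j} : Finset (Fin n)) • ΓI n (tog i {j}) := by
        rw [← ΓI_singleton j, Γg_mul_ΓI]
      rw [h1, map_smul, Pi.smul_apply, Φ_ΓI, δ, smul_eq_mul, Pi.single_eq_of_ne, mul_zero]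
      intro hh
      rw [hh] at hK
      have hij' : i ∉ ({j} : Finset (Fin n)) := by simp [hij]
      rw [card_tog_of_not_mem hij', Finset.card_singleton] at hK
      exact hK rfl
  | zero => rw [map_zero]; rfl
  | add x y _ _ hx hy => rw [map_add, Pi.add_apply, hx, hy, add_zero]
  | smul r x _ hx => rw [map_smul, Pi.smul_apply, hx, smul_zero]

end Part8

namespace Part9

open Stmt5 Part2 Part3 Part4 Part5 Part6 Part7 Part8

variable {n : ℕ}

lemma univ_card (n : ℕ) : (Finset.univ : Finset (Fin n)).card = n := by
  rw [Finset.card_univ, Fintype.card_fin]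

lemma backward (hn : 1 ≤ n) (hodd : Odd n) (α β γ : ℂ) (A : Cl n)
    (hA : A ∈ Submodule.span ℂ {x : Cl n | ∃ i j : Fin n, i ≠ j ∧ x = Γg n i * Γg n j})
    (v : Fin n → ℂ) :
    sp (algebraMap ℂ (Cl n) α + A + γ • ΓI n Finset.univ)
      (algebraMap ℂ (Cl n) β + A + γ • ΓI n Finset.univ) (emb n v) ∈ Set.range (emb n) := by
  set a := algebraMap ℂ (Cl n) α + A + γ • ΓI n Finset.univ with ha
  set b := algebraMap ℂ (Cl n) β + A + γ • ΓI n Finset.univ with hb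
  have hΦa : Φ n a = α • δ (∅ : Finset (Fin n)) + Φ n A + γ • δ (Finset.univ : Finset (Fin n)) := by
    rw [ha, map_add, map_add, Φ_algebraMap, map_smul, Φ_ΓI]
  have hΦb : Φ n b = β • δ (∅ : Finset (Fin n)) + Φ n A + γ • δ (Finset.univ : Finset (Fin n)) := by
    rw [hb, map_add, map_add, Φ_algebraMap, map_smul, Φ_ΓI]
  have hodd' := Nat.odd_iff.mp hodd
  -- key pointwise claim
  have key : ∀ (μ : Fin n) (J : Finset (Fin n)), (tog μ J).card ≠ 1 →
      epsR μ J * Φ n a J = epsL μ J * Φ n b J := by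
    intro μ J hJ
    have hpq := filter_card_partition μ J
    by_cases h0 : J = ∅
    · exfalso
      subst h0
      rw [tog_empty, Finset.card_singleton] at hJ
      exact hJ rfl
    have h0' : (δ (∅ : Finset (Fin n)) : Mo n) J = 0 := by
      rw [δ, Pi.single_eq_of_ne h0]
    by_cases huniv : J = Finset.univ
    · subst huniv
      have hμ : μ ∈ Finset.univ := Finset.mem_univ μ
      rw [if_pos hμ, univ_card] at hpq
      have hA0 : Φ n A Finset.univ = 0 := Φ_span2 hA (by rw [univ_card]; omega)
      have heq : epsR μ Finset.univ = epsL μ Finset.univ :=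
        epsR_eq_epsL_of_even μ _ (by rw [Nat.even_iff]; omega)
      rw [hΦa, hΦb, heq]
      simp only [Pi.add_apply, Pi.smul_apply, smul_eq_mul]
      rw [h0', hA0, δ, Pi.single_eq_same]
      ring
    have huniv' : (δ (Finset.univ : Finset (Fin n)) : Mo n) J = 0 := by
      rw [δ, Pi.single_eq_of_ne huniv]
    by_cases h2 : J.card = 2
    · have hμ : μ ∉ J := by
        intro hμ
        rw [card_tog_of_mem hμ, h2] at hJ
        exact hJ rfl
      rw [if_neg hμ] at hpq
      have heq : epsR μ J = epsL μ J :=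
        epsR_eq_epsL_of_even μ _ (by rw [Nat.even_iff]; omega)
      rw [hΦa, hΦb, heq]
      simp only [Pi.add_apply, Pi.smul_apply, smul_eq_mul]
      rw [h0', huniv']
      ring
    · have hA0 : Φ n A J = 0 := Φ_span2 hA h2
      rw [hΦa, hΦb]
      simp only [Pi.add_apply, Pi.smul_apply, smul_eq_mul]
      rw [h0', huniv', hA0]
      ring
  -- now conclude membership
  rw [mem_range_emb_iff]
  intro I hI
  have hsp : sp a b (emb n v) = a * emb n v - emb n v * b := rfl
  rw [hsp, emb_eq_sum]
  rw [Finset.mul_sum, Finset.sum_mul, ← Finset.sum_sub_distrib, map_sum, Finset.sum_apply]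
  apply Finset.sum_eq_zero
  intro μ _
  rw [mul_smul_comm, smul_mul_assoc, ← smul_sub, map_smul, Pi.smul_apply, map_sub,
    Pi.sub_apply, Φ_mul_Γg, Φ_Γg_mul, dop_apply, cop_apply, smul_eq_mul]
  have hk := key μ (tog μ I) (by rw [tog_tog]; exact hI)
  rw [hk]
  ring

end Part9

namespace Part10

open Stmt5 Part2 Part3 Part4 Part5 Part6 Part7 Part8 Part9

variable {n : ℕ}

lemma reconstruct (hn : 1 ≤ n) (hn2 : n ≠ 2) (x : Cl n)
    (hx : ∀ J : Finset (Fin n), J ≠ ∅ → J.card ≠ 2 → J.card ≠ n → Φ n x J = 0) :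
    x = algebraMap ℂ (Cl n) (Φ n x ∅) +
      (∑ J ∈ Finset.univ.filter (fun J : Finset (Fin n) => J.card = 2), Φ n x J • ΓI n J) +
      Φ n x Finset.univ • ΓI n Finset.univ := by
  apply Φ_injective
  rw [map_add, map_add, Φ_algebraMap, map_smul, Φ_ΓI, map_sum]
  funext I
  simp only [Pi.add_apply, Pi.smul_apply, Finset.sum_apply, smul_eq_mul, map_smul, Φ_ΓI,
    δ, Pi.single_apply]
  have hunine : (Finset.univ : Finset (Fin n)) ≠ ∅ := by
    intro hh
    have h5 := univ_card n
    rw [hh, Finset.card_empty] at h5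
    omega
  by_cases h0 : I = ∅
  · subst h0
    have hz : ∑ J ∈ Finset.univ.filter (fun J : Finset (Fin n) => J.card = 2),
        (Φ n x J * if (∅ : Finset (Fin n)) = J then (1:ℂ) else 0) = 0 := by
      apply Finset.sum_eq_zero
      intro J hJ
      rw [if_neg, mul_zero]
      intro hh
      have h6 := (Finset.mem_filter.mp hJ).2
      rw [← hh, Finset.card_empty] at h6
      omega
    rw [hz, if_pos rfl, if_neg (Ne.symm hunine), mul_one, mul_zero, add_zero, add_zero]
  · by_cases huniv : I = Finset.univ
    · subst huniv
      have hz : ∑ J ∈ Finset.univ.filter (fun J : Finset (Fin n) => J.card = 2),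
          (Φ n x J * if (Finset.univ : Finset (Fin n)) = J then (1:ℂ) else 0) = 0 := by
        apply Finset.sum_eq_zero
        intro J hJ
        rw [if_neg, mul_zero]
        intro hh
        have h6 := (Finset.mem_filter.mp hJ).2
        rw [← hh, univ_card] at h6
        omega
      rw [hz, if_pos rfl, if_neg hunine, mul_one, mul_zero, zero_add, zero_add]
    · rw [if_neg h0, if_neg huniv, mul_zero, mul_zero, zero_add, add_zero]
      by_cases h2 : I.card = 2
      · rw [Finset.sum_eq_single_of_mem I (Finset.mem_filter.mpr ⟨Finset.mem_univ I, h2⟩)]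
        · rw [if_pos rfl, mul_one]
        · intro J _ hJI
          rw [if_neg (fun hh => hJI hh.symm), mul_zero]
      · have hcn : I.card ≠ n := by
          intro hh
          exact huniv (Finset.eq_univ_of_card I (by rw [hh, Fintype.card_fin]))
        rw [hx I h0 h2 hcn, Finset.sum_eq_zero]
        intro J hJ
        rw [if_neg, mul_zero]
        intro hh
        rw [hh] at h2
        exact h2 (Finset.mem_filter.mp hJ).2

lemma forward (hn : 1 ≤ n) (hodd : Odd n) (a b : Cl n)
    (h : ∀ v : Fin n → ℂ, sp a b (emb n v) ∈ Set.range (emb n)) :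
    ∃ (α β γ : ℂ) (A : Cl n),
      A ∈ Submodule.span ℂ {x : Cl n | ∃ i j : Fin n, i ≠ j ∧ x = Γg n i * Γg n j} ∧
      a = algebraMap ℂ (Cl n) α + A + γ • ΓI n Finset.univ ∧
      b = algebraMap ℂ (Cl n) β + A + γ • ΓI n Finset.univ := by
  have hodd2 := Nat.odd_iff.mp hodd
  have hn2 : n ≠ 2 := by omega
  have hA : ∀ (μ : Fin n) (J : Finset (Fin n)), (tog μ J).card ≠ 1 →
      epsR μ J * Φ n a J = epsL μ J * Φ n b J := by
    intro μ J hJ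
    have h1 := h (Pi.single μ 1)
    have h2 : sp a b (emb n (Pi.single μ 1)) = a * Γg n μ - Γg n μ * b := rfl
    rw [h2, mem_range_emb_iff] at h1
    have h3 := h1 (tog μ J) hJ
    rw [map_sub, Pi.sub_apply, Φ_mul_Γg, Φ_Γg_mul, dop_apply, cop_apply, tog_tog] at h3
    linear_combination h3
  have f1 : ∀ J : Finset (Fin n), J.card = 2 → Φ n a J = Φ n b J := by
    intro J hJ
    obtain ⟨μ, hμ⟩ := exists_not_mem (J := J) (by omega)
    have hpq := filter_card_partition μ J
    rw [if_neg hμ] at hpq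
    apply hRL_even (hA μ J (by rw [card_tog_of_not_mem hμ]; omega))
    rw [Nat.even_iff]; omega
  have f2 : ∀ J : Finset (Fin n), J ≠ ∅ → J.card ≠ 2 → J.card ≠ n →
      Φ n a J = 0 ∧ Φ n b J = 0 := by
    intro J h0 h2 hn'
    obtain ⟨μi, hμi⟩ := Finset.nonempty_iff_ne_empty.mpr h0
    obtain ⟨μo, hμo⟩ := exists_not_mem hn'
    have hcard : 1 ≤ J.card := Finset.card_pos.mpr ⟨μi, hμi⟩
    have hpqi := filter_card_partition μi J
    have hpqo := filter_card_partition μo J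
    rw [if_pos hμi] at hpqi
    rw [if_neg hμo] at hpqo
    have hti : (tog μi J).card ≠ 1 := by rw [card_tog_of_mem hμi]; omega
    have hto : (tog μo J).card ≠ 1 := by rw [card_tog_of_not_mem hμo]; omega
    rcases Nat.even_or_odd J.card with he | ho
    · rw [Nat.even_iff] at he
      have e1 := hRL_even (hA μo J hto) (by rw [Nat.even_iff]; omega)
      have e2 := hRL_odd (hA μi J hti) (by rw [Nat.odd_iff]; omega)
      exact ⟨by linear_combination (e1 + e2) / 2, by linear_combination (e2 - e1) / 2⟩
    · rw [Nat.odd_iff] at ho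
      have e1 := hRL_even (hA μi J hti) (by rw [Nat.even_iff]; omega)
      have e2 := hRL_odd (hA μo J hto) (by rw [Nat.odd_iff]; omega)
      exact ⟨by linear_combination (e1 + e2) / 2, by linear_combination (e2 - e1) / 2⟩
  have f3 : Φ n a Finset.univ = Φ n b Finset.univ := by
    have hμ0 : (⟨0, hn⟩ : Fin n) ∈ Finset.univ := Finset.mem_univ _
    have hpq := filter_card_partition (⟨0, hn⟩ : Fin n) (Finset.univ : Finset (Fin n))
    rw [if_pos hμ0, univ_card] at hpq
    apply hRL_even (hA _ _ (by rw [card_tog_of_mem hμ0, univ_card]; omega))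
    rw [Nat.even_iff]; omega
  refine ⟨Φ n a ∅, Φ n b ∅, Φ n a Finset.univ,
    ∑ J ∈ Finset.univ.filter (fun J : Finset (Fin n) => J.card = 2), Φ n a J • ΓI n J,
    ?_, ?_, ?_⟩
  · refine Submodule.sum_mem _ fun J hJ => Submodule.smul_mem _ _ ?_
    rcases ΓI_pair (Finset.mem_filter.mp hJ).2 with ⟨i, j, hij, hEq⟩
    rw [hEq]
    exact Submodule.subset_span ⟨i, j, hij, rfl⟩
  · exact reconstruct hn hn2 a (fun J hJ0 hJ2 hJn => (f2 J hJ0 hJ2 hJn).1)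
  · have hsum : ∑ J ∈ Finset.univ.filter (fun J : Finset (Fin n) => J.card = 2),
        Φ n a J • ΓI n J =
        ∑ J ∈ Finset.univ.filter (fun J : Finset (Fin n) => J.card = 2),
        Φ n b J • ΓI n J :=
      Finset.sum_congr rfl fun J hJ => by rw [f1 J (Finset.mem_filter.mp hJ).2]
    rw [hsum, f3]
    exact reconstruct hn hn2 b (fun J hJ0 hJ2 hJn => (f2 J hJ0 hJ2 hJn).2)

end Part10


/-- characterization of linear pairs in odd dimension. -/
theorem stmt_5 (n : ℕ) (hn : 1 ≤ n) (hodd : Odd n) (a b : Cl n) :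
    (∀ v : Fin n → ℂ, sp a b (emb n v) ∈ Set.range (emb n)) ↔
    (∃ (α β γ : ℂ) (A : Cl n),
      A ∈ Submodule.span ℂ {x : Cl n | ∃ i j : Fin n, i ≠ j ∧ x = Γg n i * Γg n j} ∧
      a = algebraMap ℂ (Cl n) α + A + γ • ΓI n Finset.univ ∧
      b = algebraMap ℂ (Cl n) β + A + γ • ΓI n Finset.univ) := by
  constructor
  · exact Part10.forward hn hodd a b
  · rintro ⟨α, β, γ, A, hA, rfl, rfl⟩ v
    exact Part9.backward hn hodd α β γ A hA v
end
end

section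
/- Assume n is even. For a, b ∈ Cℓ the following are equivalent: (1) s_{a,b}(ι(v)) ∈ ι(ℂⁿ) for every v ∈ ℂⁿ (the pair (a,b) is linear); (2) there exist α, β, γ ∈ ℂ and an element A in the ℂ-linear span of {Γ_iΓ_j : i ≠ j, i,j ∈ {1,…,n}} such that a = α·1 + A + γ·ω and b = β·1 + A − γ·ω, where ω := Γ_{{1,…,n}} = Γ_1Γ_2⋯Γ_n. (Characterization of linear pairs in even dimension.) -/
noncomputable section

namespace Stmt6
open Finset

variable {n : ℕ}

/-- toggle membership of μ in I -/
def tog (μ : Fin n) (I : Finset (Fin n)) : Finset (Fin n) :=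
  if μ ∈ I then I.erase μ else insert μ I

lemma mem_tog_self (μ : Fin n) (I : Finset (Fin n)) : μ ∈ tog μ I ↔ μ ∉ I := by
  unfold tog; by_cases h : μ ∈ I <;> simp [h]

lemma mem_tog_of_ne {μ ν : Fin n} (h : μ ≠ ν) (I : Finset (Fin n)) :
    ν ∈ tog μ I ↔ ν ∈ I := by
  unfold tog; by_cases hm : μ ∈ I <;> simp [hm, Finset.mem_erase, Finset.mem_insert, h.symm,
    fun hh : ν = μ => h hh.symm]

lemma tog_tog (μ : Fin n) (I : Finset (Fin n)) : tog μ (tog μ I) = I := by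
  unfold tog
  by_cases h : μ ∈ I
  · simp [h, Finset.insert_erase h]
  · simp [h, Finset.erase_insert h]

lemma card_tog_of_mem {μ : Fin n} {I : Finset (Fin n)} (h : μ ∈ I) :
    (tog μ I).card + 1 = I.card := by
  unfold tog; rw [if_pos h]; exact Finset.card_erase_add_one h

lemma card_tog_of_not_mem {μ : Fin n} {I : Finset (Fin n)} (h : μ ∉ I) :
    (tog μ I).card = I.card + 1 := by
  unfold tog; simp [h, Finset.card_insert_of_notMem h]

def cnl (μ : Fin n) (I : Finset (Fin n)) : ℕ := (I.filter (· < μ)).card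
def cng (μ : Fin n) (I : Finset (Fin n)) : ℕ := (I.filter (μ < ·)).card
def mm (μ : Fin n) (I : Finset (Fin n)) : ℂ := if μ ∈ I then -1 else 1
def eL (μ : Fin n) (I : Finset (Fin n)) : ℂ := (-1)^(cnl μ I) * mm μ I
def eR (μ : Fin n) (I : Finset (Fin n)) : ℂ := (-1)^(cng μ I) * mm μ I

lemma neg_one_pow_erase {X : Type*} [DecidableEq X] {S : Finset X} {a : X} (h : a ∈ S) :
    (-1:ℂ)^((S.erase a).card) = -(-1)^S.card := by
  rw [← Finset.card_erase_add_one h, pow_succ]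
  ring

lemma neg_one_pow_insert {X : Type*} [DecidableEq X] {S : Finset X} {a : X} (h : a ∉ S) :
    (-1:ℂ)^((insert a S).card) = -(-1)^S.card := by
  rw [Finset.card_insert_of_notMem h, pow_succ]; ring

lemma sign_cnl_tog (μ ν : Fin n) (I : Finset (Fin n)) :
    (-1:ℂ)^(cnl ν (tog μ I)) = (if μ < ν then -1 else 1) * (-1)^(cnl ν I) := by
  unfold tog cnl
  by_cases h : μ ∈ I
  · simp only [h, if_true, Finset.filter_erase]
    by_cases hlt : μ < ν
    · have hm : μ ∈ I.filter (· < ν) := Finset.mem_filter.2 ⟨h, hlt⟩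
      rw [neg_one_pow_erase hm]; simp [hlt]
    · rw [Finset.erase_eq_of_notMem (by simp [hlt])]; simp [hlt]
  · simp only [h, if_false, Finset.filter_insert]
    by_cases hlt : μ < ν
    · rw [if_pos hlt, neg_one_pow_insert (by simp [h])]; simp [hlt]
    · rw [if_neg hlt]; simp [hlt]

lemma sign_cng_tog (μ ν : Fin n) (I : Finset (Fin n)) :
    (-1:ℂ)^(cng ν (tog μ I)) = (if ν < μ then -1 else 1) * (-1)^(cng ν I) := by
  unfold tog cng
  by_cases h : μ ∈ I
  · simp only [h, if_true, Finset.filter_erase]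
    by_cases hlt : ν < μ
    · have hm : μ ∈ I.filter (ν < ·) := Finset.mem_filter.2 ⟨h, hlt⟩
      rw [neg_one_pow_erase hm]; simp [hlt]
    · rw [Finset.erase_eq_of_notMem (by simp [hlt])]; simp [hlt]
  · simp only [h, if_false, Finset.filter_insert]
    by_cases hlt : ν < μ
    · rw [if_pos hlt, neg_one_pow_insert (by simp [h])]; simp [hlt]
    · rw [if_neg hlt]; simp [hlt]

lemma cnl_tog_self (μ : Fin n) (I : Finset (Fin n)) : cnl μ (tog μ I) = cnl μ I := by
  have := sign_cnl_tog μ μ I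
  simp at this
  unfold tog cnl at *
  by_cases h : μ ∈ I
  · simp only [h, if_true, Finset.filter_erase]
    rw [Finset.erase_eq_of_notMem (by simp)]
  · simp only [h, if_false, Finset.filter_insert]
    rw [if_neg (lt_irrefl μ)]

lemma cng_tog_self (μ : Fin n) (I : Finset (Fin n)) : cng μ (tog μ I) = cng μ I := by
  unfold tog cng
  by_cases h : μ ∈ I
  · simp only [h, if_true, Finset.filter_erase]
    rw [Finset.erase_eq_of_notMem (by simp)]
  · simp only [h, if_false, Finset.filter_insert]
    rw [if_neg (lt_irrefl μ)]

lemma mm_tog_self (μ : Fin n) (I : Finset (Fin n)) : mm μ (tog μ I) = - mm μ I := by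
  unfold mm
  by_cases h : μ ∈ I <;> simp [h, (mem_tog_self μ I)]

lemma mm_tog_of_ne {μ ν : Fin n} (h : μ ≠ ν) (I : Finset (Fin n)) :
    mm ν (tog μ I) = mm ν I := by
  unfold mm; rw [if_congr (mem_tog_of_ne h I) rfl rfl]

lemma mm_sq (μ : Fin n) (I : Finset (Fin n)) : mm μ I * mm μ I = 1 := by
  unfold mm; by_cases h : μ ∈ I <;> simp [h]

lemma sign_cnl_cng (μ : Fin n) (I : Finset (Fin n)) :
    (-1:ℂ)^(cnl μ I) * (-1)^(cng μ I) = (-1)^(I.card) * mm μ I := by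
  have hdisj : Disjoint (I.filter (· < μ)) (I.filter (μ < ·)) := by
    rw [Finset.disjoint_left]
    intro x hx1 hx2
    rw [Finset.mem_filter] at hx1 hx2
    exact absurd (lt_trans hx1.2 hx2.2) (lt_irrefl x)
  have hunion : I.filter (· < μ) ∪ I.filter (μ < ·) = I.erase μ := by
    ext x
    simp only [Finset.mem_union, Finset.mem_filter, Finset.mem_erase]
    constructor
    · rintro (⟨hx, hlt⟩ | ⟨hx, hlt⟩)
      · exact ⟨ne_of_lt hlt, hx⟩
      · exact ⟨ne_of_gt hlt, hx⟩
    · rintro ⟨hne, hx⟩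
      rcases lt_or_gt_of_ne hne with h1 | h1
      · exact Or.inl ⟨hx, h1⟩
      · exact Or.inr ⟨hx, h1⟩
  have hcard : cnl μ I + cng μ I = (I.erase μ).card := by
    rw [← hunion, Finset.card_union_of_disjoint hdisj]; rfl
  rw [← pow_add, hcard]
  unfold mm
  by_cases h : μ ∈ I
  · rw [neg_one_pow_erase h, if_pos h]; ring
  · rw [Finset.erase_eq_of_notMem h, if_neg h, mul_one]

abbrev M (n : ℕ) : Type := Finset (Fin n) → ℂ

def fop (μ : Fin n) : M n →ₗ[ℂ] M n where
  toFun φ := fun I => eL μ (tog μ I) * φ (tog μ I)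
  map_add' φ ψ := by funext I; simp [mul_add]
  map_smul' c φ := by funext I; simp [smul_eq_mul]; ring

def gop (μ : Fin n) : M n →ₗ[ℂ] M n where
  toFun φ := fun I => eR μ (tog μ I) * φ (tog μ I)
  map_add' φ ψ := by funext I; simp [mul_add]
  map_smul' c φ := by funext I; simp [smul_eq_mul]; ring

lemma fop_apply (μ : Fin n) (φ : M n) (I : Finset (Fin n)) :
    fop μ φ I = eL μ (tog μ I) * φ (tog μ I) := rfl

lemma gop_apply (μ : Fin n) (φ : M n) (I : Finset (Fin n)) :
    gop μ φ I = eR μ (tog μ I) * φ (tog μ I) := rfl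

lemma neg_one_pow_sq (k : ℕ) : (-1:ℂ)^k * (-1)^k = 1 := by
  rw [← pow_add]; exact Even.neg_one_pow ⟨k, rfl⟩

lemma tog_comm {μ ν : Fin n} (h : μ ≠ ν) (I : Finset (Fin n)) :
    tog ν (tog μ I) = tog μ (tog ν I) := by
  ext x
  by_cases hxμ : x = μ
  · subst hxμ
    rw [mem_tog_of_ne (Ne.symm h), mem_tog_self, mem_tog_self, mem_tog_of_ne (Ne.symm h)]
  · by_cases hxν : x = ν
    · subst hxν
      rw [mem_tog_self, mem_tog_of_ne (fun hh => hxμ hh.symm), mem_tog_of_ne (fun hh => hxμ hh.symm), mem_tog_self]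
    · rw [mem_tog_of_ne (fun hh => hxν hh.symm), mem_tog_of_ne (fun hh => hxμ hh.symm),
        mem_tog_of_ne (fun hh => hxμ hh.symm), mem_tog_of_ne (fun hh => hxν hh.symm)]

lemma eL_tog_mul_eL (μ : Fin n) (I : Finset (Fin n)) : eL μ (tog μ I) * eL μ I = -1 := by
  unfold eL
  rw [cnl_tog_self, mm_tog_self]
  have heq : (-1:ℂ)^(cnl μ I) * -mm μ I * ((-1)^(cnl μ I) * mm μ I)
      = -(((-1:ℂ)^(cnl μ I) * (-1)^(cnl μ I)) * (mm μ I * mm μ I)) := by ring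
  rw [heq, neg_one_pow_sq, mm_sq]
  norm_num

lemma fop_fop_self (μ : Fin n) (φ : M n) : fop μ (fop μ φ) = -φ := by
  funext I
  rw [fop_apply, fop_apply, tog_tog]
  have h := eL_tog_mul_eL μ I
  simp only [Pi.neg_apply]
  linear_combination (φ I) * h

lemma fop_fop_anti {μ ν : Fin n} (h : μ ≠ ν) (φ : M n) :
    fop μ (fop ν φ) = - fop ν (fop μ φ) := by
  funext I
  simp only [fop_apply, Pi.neg_apply]
  rw [← tog_comm h I]
  have h1 : eL μ (tog μ I) = (-1)^(cnl μ I) * -(mm μ I) := by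
    unfold eL; rw [cnl_tog_self, mm_tog_self]
  have h2 : eL ν (tog ν (tog μ I))
      = ((if μ < ν then (-1:ℂ) else 1) * (-1)^(cnl ν I)) * -(mm ν I) := by
    unfold eL; rw [cnl_tog_self, mm_tog_self, mm_tog_of_ne h I, sign_cnl_tog μ ν I]
  have h3 : eL ν (tog ν I) = (-1)^(cnl ν I) * -(mm ν I) := by
    unfold eL; rw [cnl_tog_self, mm_tog_self]
  have h4 : eL μ (tog ν (tog μ I))
      = ((if ν < μ then (-1:ℂ) else 1) * (-1)^(cnl μ I)) * -(mm μ I) := by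
    unfold eL
    rw [sign_cnl_tog ν μ (tog μ I), cnl_tog_self, mm_tog_of_ne (Ne.symm h) (tog μ I),
      mm_tog_self]
  rw [h1, h2, h3, h4]
  rcases lt_or_gt_of_ne h with hlt | hlt
  · rw [if_pos hlt, if_neg (not_lt_of_gt hlt)]; ring
  · rw [if_neg (not_lt_of_gt hlt), if_pos hlt]; ring

lemma fop_gop_comm (μ ν : Fin n) (φ : M n) : fop μ (gop ν φ) = gop ν (fop μ φ) := by
  by_cases h : μ = ν
  · subst h
    funext I
    simp only [fop_apply, gop_apply, tog_tog]
    unfold eL eR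
    rw [cnl_tog_self, cng_tog_self, mm_tog_self]
    ring
  · funext I
    simp only [fop_apply, gop_apply]
    rw [← tog_comm h I]
    have h1 : eL μ (tog μ I) = (-1)^(cnl μ I) * -(mm μ I) := by
      unfold eL; rw [cnl_tog_self, mm_tog_self]
    have h2 : eR ν (tog ν (tog μ I))
        = ((if ν < μ then (-1:ℂ) else 1) * (-1)^(cng ν I)) * -(mm ν I) := by
      unfold eR; rw [cng_tog_self, mm_tog_self, mm_tog_of_ne h I, sign_cng_tog μ ν I]
    have h3 : eR ν (tog ν I) = (-1)^(cng ν I) * -(mm ν I) := by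
      unfold eR; rw [cng_tog_self, mm_tog_self]
    have h4 : eL μ (tog ν (tog μ I))
        = ((if ν < μ then (-1:ℂ) else 1) * (-1)^(cnl μ I)) * -(mm μ I) := by
      unfold eL
      rw [sign_cnl_tog ν μ (tog μ I), cnl_tog_self, mm_tog_of_ne (Ne.symm h) (tog μ I),
        mm_tog_self]
    rw [h1, h2, h3, h4]
    ring
def fmap (n : ℕ) : (Fin n → ℂ) →ₗ[ℂ] Module.End ℂ (M n) where
  toFun v := ∑ μ : Fin n, v μ • (fop μ : M n →ₗ[ℂ] M n)
  map_add' v w := by simp [add_smul, Finset.sum_add_distrib]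
  map_smul' c v := by simp [Finset.smul_sum, smul_smul]

lemma fop_pair (μ ν : Fin n) (φ : M n) :
    fop μ (fop ν φ) + fop ν (fop μ φ) = if μ = ν then (-2:ℂ) • φ else 0 := by
  by_cases h : μ = ν
  · subst h
    rw [if_pos rfl, fop_fop_self]
    funext I; simp; ring
  · rw [if_neg h, fop_fop_anti h]
    abel

lemma fmap_sq (n : ℕ) (v : Fin n → ℂ) :
    fmap n v * fmap n v = algebraMap ℂ (Module.End ℂ (M n)) (Qf n v) := by
  apply LinearMap.ext
  intro φ
  have hQ : Qf n v = -∑ μ : Fin n, v μ * v μ := by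
    unfold Qf
    rw [QuadraticMap.weightedSumSquares_apply]
    simp [Finset.sum_neg_distrib]
  have happ : ∀ ψ : M n, fmap n v ψ = ∑ μ : Fin n, v μ • fop μ ψ := by
    intro ψ
    show (∑ μ : Fin n, v μ • (fop μ : M n →ₗ[ℂ] M n)) ψ = _
    rw [LinearMap.sum_apply]
    simp
  have hS : (fmap n v) ((fmap n v) φ)
      = ∑ μ : Fin n, ∑ ν : Fin n, (v μ * v ν) • fop μ (fop ν φ) := by
    rw [happ, happ]
    simp [map_sum, Finset.smul_sum, smul_smul]
  have hsym : (∑ μ : Fin n, ∑ ν : Fin n, (v μ * v ν) • fop μ (fop ν φ))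
      = ∑ μ : Fin n, ∑ ν : Fin n, (v ν * v μ) • fop ν (fop μ φ) := by
    rw [Finset.sum_comm]
  have hdouble : (∑ μ : Fin n, ∑ ν : Fin n, (v μ * v ν) • fop μ (fop ν φ))
      + (∑ μ : Fin n, ∑ ν : Fin n, (v μ * v ν) • fop μ (fop ν φ))
      = ∑ μ : Fin n, (-2 * (v μ * v μ)) • φ := by
    nth_rewrite 2 [hsym]
    rw [← Finset.sum_add_distrib]
    have : ∀ μ : Fin n, ((∑ ν : Fin n, (v μ * v ν) • fop μ (fop ν φ))
        + ∑ ν : Fin n, (v ν * v μ) • fop ν (fop μ φ))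
        = ∑ ν : Fin n, (if μ = ν then (-2 * (v μ * v μ)) • φ else 0) := by
      intro μ
      rw [← Finset.sum_add_distrib]
      apply Finset.sum_congr rfl
      intro ν _
      have : (v μ * v ν) • fop μ (fop ν φ) + (v ν * v μ) • fop ν (fop μ φ)
          = (v μ * v ν) • (fop μ (fop ν φ) + fop ν (fop μ φ)) := by
        rw [smul_add, mul_comm (v ν) (v μ)]
      rw [this, fop_pair]
      by_cases h : μ = ν
      · subst h; rw [if_pos rfl, if_pos rfl, smul_smul]; ring_nf
      · rw [if_neg h, if_neg h, smul_zero]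
    rw [Finset.sum_congr rfl (fun μ _ => this μ)]
    apply Finset.sum_congr rfl
    intro μ _
    rw [Finset.sum_ite_eq]
    simp
  apply smul_right_injective (M n) (two_ne_zero (α := ℂ))
  show (2:ℂ) • _ = (2:ℂ) • _
  rw [two_smul, two_smul, Module.End.mul_apply, Module.algebraMap_end_apply, hS, hdouble, hQ]
  rw [← add_smul]
  rw [← neg_add, ← Finset.sum_add_distrib, ← Finset.sum_neg_distrib, Finset.sum_smul]
  apply Finset.sum_congr rfl
  intro μ _
  congr 1
  ring
def ρ (n : ℕ) : Cl n →ₐ[ℂ] Module.End ℂ (M n) :=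
  CliffordAlgebra.lift (Qf n) ⟨fmap n, fmap_sq n⟩

def δ (I : Finset (Fin n)) : M n := Pi.single I 1

def co (n : ℕ) : Cl n →ₗ[ℂ] M n where
  toFun x := ρ n x (δ ∅)
  map_add' x y := by simp
  map_smul' c x := by simp

lemma co_apply (x : Cl n) : co n x = ρ n x (δ ∅) := rfl

lemma ρ_emb (v : Fin n → ℂ) : ρ n (emb n v) = fmap n v := by
  unfold ρ emb
  exact CliffordAlgebra.lift_ι_apply _ _ v

lemma fmap_apply (v : Fin n → ℂ) (φ : M n) :
    fmap n v φ = ∑ μ : Fin n, v μ • fop μ φ := by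
  show (∑ μ : Fin n, v μ • (fop μ : M n →ₗ[ℂ] M n)) φ = _
  rw [LinearMap.sum_apply]
  simp

lemma ρ_Γg (μ : Fin n) (φ : M n) : ρ n (Γg n μ) φ = fop μ φ := by
  unfold Γg
  rw [ρ_emb, fmap_apply, Finset.sum_eq_single μ]
  · simp
  · intro ν _ hν
    rw [Pi.single_eq_of_ne hν]
    simp
  · intro h
    exact absurd (Finset.mem_univ μ) h

lemma co_mul (x y : Cl n) : co n (x * y) = ρ n x (co n y) := by
  rw [co_apply, co_apply, map_mul]
  rfl

lemma fop_gop_δ_empty (μ : Fin n) : fop μ (δ (∅ : Finset (Fin n))) = gop μ (δ ∅) := by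
  funext I
  rw [fop_apply, gop_apply]
  by_cases h : tog μ I = ∅
  · rw [h]; unfold eL eR cnl cng mm; simp
  · unfold δ
    rw [Pi.single_eq_of_ne h]
    ring

/-- ρ x commutes with each gop μ -/
lemma ρ_gop_comm (x : Cl n) (μ : Fin n) (φ : M n) :
    ρ n x (gop μ φ) = gop μ (ρ n x φ) := by
  induction x using CliffordAlgebra.induction generalizing φ with
  | algebraMap r => simp [Module.algebraMap_end_apply]
  | ι v =>
      show ρ n (emb n v) (gop μ φ) = gop μ (ρ n (emb n v) φ)
      rw [ρ_emb, fmap_apply, fmap_apply, map_sum]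
      simp only [map_smul]
      exact Finset.sum_congr rfl (fun ν _ => by rw [fop_gop_comm ν μ φ])
  | mul x y hx hy => rw [map_mul]; simp only [Module.End.mul_apply]; rw [hy, hx]
  | add x y hx hy => rw [map_add]; simp only [LinearMap.add_apply]; rw [hx, hy, map_add]

/-- coordinates of right multiplication by Γ_μ -/
lemma co_mul_Γg (x : Cl n) (μ : Fin n) : co n (x * Γg n μ) = gop μ (co n x) := by
  induction x using CliffordAlgebra.induction with
  | algebraMap r =>
      rw [Algebra.algebraMap_eq_smul_one, smul_mul_assoc, one_mul, map_smul, map_smul]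
      rw [co_apply, ρ_Γg, fop_gop_δ_empty, co_apply, map_one]
      simp
  | ι v =>
      show co n (emb n v * Γg n μ) = gop μ (co n (emb n v))
      rw [co_mul, ρ_emb, co_apply, ρ_Γg, co_apply, ρ_emb, fmap_apply, fmap_apply, map_sum]
      apply Finset.sum_congr rfl
      intro ν _
      rw [map_smul]
      congr 1
      rw [fop_gop_δ_empty, fop_gop_comm]
  | mul x y hx hy =>
      rw [mul_assoc, co_mul, hy, ρ_gop_comm, ← co_mul]
  | add x y hx hy =>
      rw [add_mul, map_add, hx, hy, map_add, map_add]
lemma ΓI_empty : ΓI n ∅ = 1 := by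
  unfold ΓI; rw [Finset.sort_empty]; rfl

lemma ΓI_singleton (μ : Fin n) : ΓI n {μ} = Γg n μ := by
  unfold ΓI; rw [Finset.sort_singleton]; simp

lemma ΓI_insert {μ : Fin n} {I : Finset (Fin n)} (h1 : ∀ b ∈ I, μ ≤ b) (h2 : μ ∉ I) :
    ΓI n (insert μ I) = Γg n μ * ΓI n I := by
  unfold ΓI
  rw [Finset.sort_insert (r := (· ≤ ·)) h1 h2, List.map_cons, List.prod_cons]

lemma Qf_apply (v : Fin n → ℂ) : Qf n v = -∑ i : Fin n, v i * v i := by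
  unfold Qf
  rw [QuadraticMap.weightedSumSquares_apply, ← Finset.sum_neg_distrib]
  apply Finset.sum_congr rfl
  intro i _
  simp

lemma Qf_single (μ : Fin n) : Qf n (Pi.single μ 1) = -1 := by
  rw [Qf_apply, Finset.sum_eq_single μ]
  · simp
  · intro ν _ hν; rw [Pi.single_eq_of_ne hν]; ring
  · intro h; exact absurd (Finset.mem_univ μ) h

lemma Γg_sq (μ : Fin n) : Γg n μ * Γg n μ = -1 := by
  unfold Γg emb
  rw [CliffordAlgebra.ι_sq_scalar, Qf_single, map_neg, map_one]

lemma polar_Qf (u w : Fin n → ℂ) :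
    QuadraticMap.polar (⇑(Qf n)) u w = -∑ i : Fin n, 2 * (u i * w i) := by
  unfold QuadraticMap.polar
  rw [Qf_apply, Qf_apply, Qf_apply]
  have key : ∑ i : Fin n, (u + w) i * (u + w) i
      = (∑ i : Fin n, u i * u i) + (∑ i : Fin n, w i * w i) + ∑ i : Fin n, 2 * (u i * w i) := by
    rw [← Finset.sum_add_distrib, ← Finset.sum_add_distrib]
    apply Finset.sum_congr rfl
    intro i _
    simp only [Pi.add_apply]
    ring
  rw [key]
  ring

lemma Γg_anti {μ ν : Fin n} (h : μ ≠ ν) : Γg n μ * Γg n ν = -(Γg n ν * Γg n μ) := by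
  have hpolar : QuadraticMap.polar (⇑(Qf n)) (Pi.single μ (1:ℂ)) (Pi.single ν 1) = 0 := by
    rw [polar_Qf, neg_eq_zero]
    apply Finset.sum_eq_zero
    intro i _
    by_cases hμ : i = μ
    · subst hμ
      rw [Pi.single_eq_of_ne h]
      ring
    · rw [Pi.single_eq_of_ne hμ]
      ring
  have h2 := CliffordAlgebra.ι_mul_ι_add_swap (Q := Qf n) (Pi.single μ (1:ℂ)) (Pi.single ν 1)
  rw [hpolar, map_zero] at h2
  have h3 : Γg n μ * Γg n ν + Γg n ν * Γg n μ = 0 := h2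
  exact eq_neg_of_add_eq_zero_left h3

lemma emb_eq_sum (v : Fin n → ℂ) : emb n v = ∑ μ : Fin n, v μ • Γg n μ := by
  have hv : v = ∑ μ : Fin n, v μ • (Pi.single μ (1:ℂ) : Fin n → ℂ) := by
    funext j
    rw [Finset.sum_apply, Finset.sum_eq_single j]
    · simp
    · intro ν _ hν; rw [Pi.smul_apply, Pi.single_eq_of_ne (Ne.symm hν), smul_zero]
    · intro h; exact absurd (Finset.mem_univ j) h
  conv_lhs => rw [hv]
  rw [map_sum]
  exact Finset.sum_congr rfl (fun μ _ => by rw [map_smul]; rfl)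

lemma erase_eq_tog {μ : Fin n} {I : Finset (Fin n)} (h : μ ∈ I) : I.erase μ = tog μ I := by
  unfold tog; rw [if_pos h]

lemma insert_eq_tog {μ : Fin n} {I : Finset (Fin n)} (h : μ ∉ I) : insert μ I = tog μ I := by
  unfold tog; rw [if_neg h]

lemma cnl_eq_zero_of_min {μ : Fin n} {I : Finset (Fin n)} (h : ∀ j ∈ I, μ ≤ j) :
    cnl μ I = 0 := by
  unfold cnl
  rw [Finset.card_eq_zero, Finset.filter_eq_empty_iff]
  intro j hj
  exact not_lt_of_ge (h j hj)

lemma Γg_mul_ΓI (μ : Fin n) (I : Finset (Fin n)) :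
    Γg n μ * ΓI n I = eL μ I • ΓI n (tog μ I) := by
  induction I using Finset.strongInduction with
  | _ I ih =>
    by_cases hI : I = ∅
    · subst hI
      have h1 : eL μ (∅ : Finset (Fin n)) = 1 := by
        unfold eL mm cnl; simp
      rw [ΓI_empty, mul_one, ← insert_eq_tog (Finset.notMem_empty μ), h1, one_smul]
      exact (ΓI_singleton μ).symm
    · have hne : I.Nonempty := Finset.nonempty_of_ne_empty hI
      obtain ⟨m, hm, hmin⟩ : ∃ m ∈ I, ∀ j ∈ I, m ≤ j :=
        ⟨I.min' hne, Finset.min'_mem I hne, fun j hj => Finset.min'_le I j hj⟩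
      have hdecomp : ΓI n I = Γg n m * ΓI n (I.erase m) := by
        conv_lhs => rw [← Finset.insert_erase hm]
        exact ΓI_insert (fun b hb => hmin b (Finset.mem_of_mem_erase hb))
          (Finset.notMem_erase m I)
      rcases lt_trichotomy μ m with hlt | heq | hgt
      · -- μ < m
        have hμI : μ ∉ I := fun hc => absurd (hmin μ hc) (not_le_of_gt hlt)
        have h1 : ∀ b ∈ I, μ ≤ b := fun b hb => le_of_lt (lt_of_lt_of_le hlt (hmin b hb))
        have h2 : eL μ I = 1 := by
          unfold eL
          rw [cnl_eq_zero_of_min h1]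
          unfold mm
          rw [if_neg hμI]
          norm_num
        rw [← ΓI_insert h1 hμI, insert_eq_tog hμI, h2, one_smul]
      · -- μ = m
        subst heq
        have h2 : eL μ I = -1 := by
          unfold eL
          rw [cnl_eq_zero_of_min hmin]
          unfold mm
          rw [if_pos hm]
          norm_num
        rw [hdecomp, ← mul_assoc, Γg_sq, h2, neg_one_smul, neg_one_mul, erase_eq_tog hm]
      · -- m < μ
        have hμm : μ ≠ m := ne_of_gt hgt
        have hIe : I.erase m ⊂ I := Finset.erase_ssubset hm
        have h2 : m ∉ tog μ (I.erase m) := by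
          rw [mem_tog_of_ne hμm]
          exact Finset.notMem_erase m I
        have h1 : ∀ b ∈ tog μ (I.erase m), m ≤ b := by
          intro b hb
          by_cases hbμ : b = μ
          · exact hbμ ▸ le_of_lt hgt
          · have hb' : b ∈ I.erase m := (mem_tog_of_ne (fun hh => hbμ hh.symm) _).mp hb
            exact hmin b (Finset.mem_of_mem_erase hb')
        have hins : Γg n m * ΓI n (tog μ (I.erase m)) = ΓI n (insert m (tog μ (I.erase m))) :=
          (ΓI_insert h1 h2).symm
        have hset : insert m (tog μ (I.erase m)) = tog μ I := by
          ext x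
          rw [Finset.mem_insert]
          by_cases hxμ : x = μ
          · subst hxμ
            rw [mem_tog_self, mem_tog_self, Finset.mem_erase]
            constructor
            · rintro (h | h)
              · exact absurd h hμm
              · intro hI2; exact h ⟨hμm, hI2⟩
            · intro h; right; intro hc; exact h hc.2
          · rw [mem_tog_of_ne (fun hh => hxμ hh.symm), mem_tog_of_ne (fun hh => hxμ hh.symm),
              Finset.mem_erase]
            by_cases hxm : x = m
            · subst hxm
              simp [hm]
            · constructor
              · rintro (h | h)
                · exact absurd h hxm
                · exact h.2
              · intro h; right; exact ⟨hxm, h⟩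
        have hsign : eL μ I = - eL μ (I.erase m) := by
          unfold eL
          rw [erase_eq_tog hm, sign_cnl_tog m μ I, mm_tog_of_ne (Ne.symm hμm) I, if_pos hgt]
          ring
        rw [hdecomp, ← mul_assoc, Γg_anti hμm, neg_mul, mul_assoc, ih (I.erase m) hIe,
          mul_smul_comm, hins, hset, hsign, neg_smul]
def SΓ (n : ℕ) : Submodule ℂ (Cl n) := Submodule.span ℂ (Set.range (ΓI n))

lemma one_mem_SΓ : (1 : Cl n) ∈ SΓ n := by
  rw [← ΓI_empty]
  exact Submodule.subset_span ⟨∅, rfl⟩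

lemma emb_mul_mem_SΓ (v : Fin n → ℂ) {y : Cl n} (hy : y ∈ SΓ n) : emb n v * y ∈ SΓ n := by
  induction hy using Submodule.span_induction with
  | mem x hx =>
      obtain ⟨I, rfl⟩ := hx
      rw [emb_eq_sum, Finset.sum_mul]
      apply Submodule.sum_mem
      intro μ _
      rw [smul_mul_assoc, Γg_mul_ΓI, smul_smul]
      exact Submodule.smul_mem _ _ (Submodule.subset_span ⟨tog μ I, rfl⟩)
  | zero => rw [mul_zero]; exact Submodule.zero_mem _
  | add x y hx hy ihx ihy => rw [mul_add]; exact Submodule.add_mem _ ihx ihy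
  | smul c x hx ihx => rw [mul_smul_comm]; exact Submodule.smul_mem _ _ ihx

lemma mem_SΓ (x : Cl n) : x ∈ SΓ n := by
  have key : ∀ x : Cl n, ∀ y ∈ SΓ n, x * y ∈ SΓ n := by
    intro x
    induction x using CliffordAlgebra.induction with
    | algebraMap r =>
        intro y hy
        rw [Algebra.algebraMap_eq_smul_one, smul_mul_assoc, one_mul]
        exact Submodule.smul_mem _ _ hy
    | ι v => exact fun y hy => emb_mul_mem_SΓ v hy
    | mul a b ha hb => intro y hy; rw [mul_assoc]; exact ha _ (hb y hy)
    | add a b ha hb => intro y hy; rw [add_mul]; exact Submodule.add_mem _ (ha y hy) (hb y hy)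
  have := key x 1 one_mem_SΓ
  rwa [mul_one] at this

lemma co_ΓI (I : Finset (Fin n)) : co n (ΓI n I) = δ I := by
  induction I using Finset.strongInduction with
  | _ I ih =>
    by_cases hI : I = ∅
    · subst hI
      rw [ΓI_empty, co_apply, map_one]
      rfl
    · have hne : I.Nonempty := Finset.nonempty_of_ne_empty hI
      obtain ⟨m, hm, hmin⟩ : ∃ m ∈ I, ∀ j ∈ I, m ≤ j :=
        ⟨I.min' hne, Finset.min'_mem I hne, fun j hj => Finset.min'_le I j hj⟩
      have hdecomp : ΓI n I = Γg n m * ΓI n (I.erase m) := by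
        conv_lhs => rw [← Finset.insert_erase hm]
        exact ΓI_insert (fun b hb => hmin b (Finset.mem_of_mem_erase hb))
          (Finset.notMem_erase m I)
      rw [hdecomp, co_mul, ih (I.erase m) (Finset.erase_ssubset hm), ρ_Γg]
      funext K
      rw [fop_apply]
      by_cases hK : K = I
      · subst hK
        rw [← erase_eq_tog hm]
        have h1 : eL m (K.erase m) = 1 := by
          unfold eL
          have : cnl m (K.erase m) = 0 :=
            cnl_eq_zero_of_min (fun j hj => hmin j (Finset.mem_of_mem_erase hj))
          rw [this]
          unfold mm
          rw [if_neg (Finset.notMem_erase m K)]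
          norm_num
        unfold δ
        rw [h1, Pi.single_eq_same, Pi.single_eq_same, one_mul]
      · have h3 : tog m K ≠ I.erase m := by
          intro hc
          apply hK
          have h4 := congrArg (tog m) hc
          rw [tog_tog] at h4
          rw [h4, ← insert_eq_tog (Finset.notMem_erase m I), Finset.insert_erase hm]
        unfold δ
        rw [Pi.single_eq_of_ne h3, Pi.single_eq_of_ne hK, mul_zero]
lemma expand (x : Cl n) : (∑ I : Finset (Fin n), co n x I • ΓI n I) = x := by
  induction mem_SΓ x using Submodule.span_induction with
  | mem y hy =>
      obtain ⟨J, rfl⟩ := hy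
      rw [co_ΓI]
      unfold δ
      rw [Finset.sum_eq_single J]
      · rw [Pi.single_eq_same, one_smul]
      · intro I _ hI
        rw [Pi.single_eq_of_ne hI, zero_smul]
      · intro h; exact absurd (Finset.mem_univ J) h
  | zero => simp
  | add y z hy hz ihy ihz =>
      rw [map_add]
      have h1 : ∀ I : Finset (Fin n), ((co n y + co n z) I) • ΓI n I
          = co n y I • ΓI n I + co n z I • ΓI n I := by
        intro I; rw [Pi.add_apply, add_smul]
      rw [Finset.sum_congr rfl (fun I _ => h1 I), Finset.sum_add_distrib, ihy, ihz]
  | smul c y hy ihy =>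
      rw [map_smul]
      have h1 : ∀ I : Finset (Fin n), ((c • co n y) I) • ΓI n I
          = c • (co n y I • ΓI n I) := by
        intro I; rw [Pi.smul_apply, smul_smul, smul_eq_mul]
      rw [Finset.sum_congr rfl (fun I _ => h1 I), ← Finset.smul_sum, ihy]

lemma co_inj : Function.Injective (co n) := by
  intro x y h
  rw [← expand x, ← expand y, h]

lemma fop_δ_empty (μ : Fin n) : fop μ (δ (∅ : Finset (Fin n))) = δ {μ} := by
  funext K
  rw [fop_apply]
  unfold δ
  by_cases h : tog μ K = ∅
  · have hK : K = {μ} := by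
      have h4 := congrArg (tog μ) h
      rw [tog_tog] at h4
      rw [h4, ← insert_eq_tog (Finset.notMem_empty μ)]
      rfl
    subst hK
    rw [h, Pi.single_eq_same, Pi.single_eq_same]
    have : eL μ (∅ : Finset (Fin n)) = 1 := by
      unfold eL mm cnl; simp
    rw [this, mul_one]
  · have hK : K ≠ {μ} := by
      intro hc
      subst hc
      apply h
      rw [← erase_eq_tog (Finset.mem_singleton_self μ)]
      exact Finset.erase_singleton μ
    rw [Pi.single_eq_of_ne h, Pi.single_eq_of_ne hK, mul_zero]

lemma co_emb (v : Fin n → ℂ) :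
    co n (emb n v) = ∑ μ : Fin n, v μ • δ ({μ} : Finset (Fin n)) := by
  rw [co_apply, ρ_emb, fmap_apply]
  exact Finset.sum_congr rfl (fun μ _ => by rw [fop_δ_empty])

lemma co_emb_card {K : Finset (Fin n)} (v : Fin n → ℂ) (h : K.card ≠ 1) :
    co n (emb n v) K = 0 := by
  rw [co_emb, Finset.sum_apply]
  apply Finset.sum_eq_zero
  intro μ _
  have : K ≠ {μ} := by
    intro hc; apply h; rw [hc]; exact Finset.card_singleton μ
  rw [Pi.smul_apply]
  unfold δ
  rw [Pi.single_eq_of_ne this, smul_zero]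

lemma mem_range_emb_iff {x : Cl n} :
    x ∈ Set.range (emb n) ↔ ∀ K : Finset (Fin n), K.card ≠ 1 → co n x K = 0 := by
  constructor
  · rintro ⟨v, rfl⟩ K hK
    exact co_emb_card v hK
  · intro h
    refine ⟨fun μ => co n x {μ}, ?_⟩
    apply co_inj
    funext K
    by_cases hc : K.card = 1
    · obtain ⟨ν, rfl⟩ := Finset.card_eq_one.mp hc
      rw [co_emb, Finset.sum_apply, Finset.sum_eq_single ν]
      · unfold δ
        rw [Pi.smul_apply, Pi.single_eq_same, smul_eq_mul, mul_one]
      · intro μ _ hμ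
        have : ({ν} : Finset (Fin n)) ≠ {μ} := fun hc2 => hμ (Finset.singleton_injective hc2).symm
        rw [Pi.smul_apply]
        unfold δ
        rw [Pi.single_eq_of_ne this, smul_zero]
      · intro hh; exact absurd (Finset.mem_univ ν) hh
    · rw [co_emb_card _ hc, h K hc]
lemma eR_sq (μ : Fin n) (J : Finset (Fin n)) : eR μ J * eR μ J = 1 := by
  unfold eR
  rw [mul_mul_mul_comm, neg_one_pow_sq, mm_sq, mul_one]

lemma eR_mul_eL (μ : Fin n) (J : Finset (Fin n)) :
    eR μ J * eL μ J = (-1)^(J.card) * mm μ J := by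
  unfold eR eL
  rw [mul_mul_mul_comm, mul_comm ((-1:ℂ)^(cng μ J)) ((-1:ℂ)^(cnl μ J)), sign_cnl_cng, mm_sq]
  ring

lemma rel_factor {μ : Fin n} {J : Finset (Fin n)} {x y : ℂ}
    (h : eR μ J * x = eL μ J * y) :
    x = ((-1)^(J.card) * mm μ J) * y := by
  have h2 := congrArg (fun t => eR μ J * t) h
  rw [← mul_assoc, eR_sq, one_mul, ← mul_assoc, eR_mul_eL] at h2
  exact h2

lemma key_rel {a b : Cl n} (h : ∀ v : Fin n → ℂ, sp a b (emb n v) ∈ Set.range (emb n)) :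
    ∀ (μ : Fin n) (J : Finset (Fin n)), (tog μ J).card ≠ 1 →
      eR μ J * co n a J = eL μ J * co n b J := by
  intro μ J hJ
  have h1 := (mem_range_emb_iff.mp (h (Pi.single μ 1))) (tog μ J) hJ
  have he : emb n (Pi.single μ 1) = Γg n μ := rfl
  rw [he] at h1
  have e1 : co n (sp a b (Γg n μ)) = gop μ (co n a) - fop μ (co n b) := by
    unfold sp
    rw [map_sub, co_mul_Γg, co_mul, ρ_Γg]
  rw [e1, Pi.sub_apply, gop_apply, fop_apply, tog_tog] at h1
  linear_combination h1

lemma coords_vanish {a b : Cl n}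
    (hrel : ∀ (μ : Fin n) (J : Finset (Fin n)), (tog μ J).card ≠ 1 →
      eR μ J * co n a J = eL μ J * co n b J)
    {J : Finset (Fin n)} (hne : J ≠ ∅) (huniv : J ≠ Finset.univ) (hcard : J.card ≠ 2) :
    co n a J = 0 ∧ co n b J = 0 := by
  obtain ⟨μ, hμ⟩ := Finset.nonempty_of_ne_empty hne
  obtain ⟨ν, hν⟩ : ∃ ν, ν ∉ J := by
    by_contra hc
    push_neg at hc
    exact huniv (Finset.eq_univ_iff_forall.mpr hc)
  have hc1 : (tog μ J).card ≠ 1 := by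
    have := card_tog_of_mem hμ
    omega
  have hc2 : (tog ν J).card ≠ 1 := by
    rw [card_tog_of_not_mem hν]
    have : J.card ≠ 0 := fun hz => hne (Finset.card_eq_zero.mp hz)
    omega
  have ha1 := rel_factor (hrel μ J hc1)
  have ha2 := rel_factor (hrel ν J hc2)
  rw [show mm μ J = -1 from if_pos hμ] at ha1
  rw [show mm ν J = 1 from if_neg hν] at ha2
  have hb : co n b J = 0 := by
    have h3 : (2:ℂ) * ((-1)^J.card * co n b J) = 0 := by
      linear_combination ha1 - ha2
    have h4 := (mul_eq_zero.mp h3).resolve_left two_ne_zero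
    rcases mul_eq_zero.mp h4 with h | h
    · exact absurd h (pow_ne_zero _ (by norm_num))
    · exact h
  constructor
  · rw [ha2, hb, mul_zero]
  · exact hb

lemma coords_eq_two {a b : Cl n}
    (hrel : ∀ (μ : Fin n) (J : Finset (Fin n)), (tog μ J).card ≠ 1 →
      eR μ J * co n a J = eL μ J * co n b J)
    {J : Finset (Fin n)} (hJ2 : J.card = 2) (huniv : J ≠ Finset.univ) :
    co n a J = co n b J := by
  obtain ⟨ν, hν⟩ : ∃ ν, ν ∉ J := by
    by_contra hc
    push_neg at hc
    exact huniv (Finset.eq_univ_iff_forall.mpr hc)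
  have hc2 : (tog ν J).card ≠ 1 := by
    rw [card_tog_of_not_mem hν]
    omega
  have ha2 := rel_factor (hrel ν J hc2)
  rw [show mm ν J = 1 from if_neg hν, hJ2] at ha2
  rw [ha2]
  norm_num

lemma coords_univ {a b : Cl n} (heven : Even n) (hn : 1 ≤ n) (hn2 : n ≠ 2)
    (hrel : ∀ (μ : Fin n) (J : Finset (Fin n)), (tog μ J).card ≠ 1 →
      eR μ J * co n a J = eL μ J * co n b J) :
    co n a Finset.univ = - co n b Finset.univ := by
  have hpos : 0 < n := hn
  set μ : Fin n := ⟨0, hpos⟩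
  have hμ : μ ∈ (Finset.univ : Finset (Fin n)) := Finset.mem_univ μ
  have hcu : (Finset.univ : Finset (Fin n)).card = n := by
    rw [Finset.card_univ, Fintype.card_fin]
  have hc1 : (tog μ (Finset.univ : Finset (Fin n))).card ≠ 1 := by
    have := card_tog_of_mem hμ
    omega
  have ha := rel_factor (hrel μ Finset.univ hc1)
  rw [show mm μ (Finset.univ : Finset (Fin n)) = -1 from if_pos hμ, hcu,
    heven.neg_one_pow] at ha
  rw [ha]
  ring
lemma sp_emb_eq_sum (a b : Cl n) (v : Fin n → ℂ) :
    sp a b (emb n v) = ∑ μ : Fin n, v μ • sp a b (Γg n μ) := by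
  unfold sp
  rw [emb_eq_sum, Finset.mul_sum, Finset.sum_mul, ← Finset.sum_sub_distrib]
  apply Finset.sum_congr rfl
  intro μ _
  rw [mul_smul_comm, smul_mul_assoc, ← smul_sub]

lemma mem_range_iff' {x : Cl n} :
    x ∈ Set.range (emb n) ↔ x ∈ LinearMap.range (emb n) := by
  rw [LinearMap.mem_range]
  exact Iff.rfl

lemma omega_anti (heven : Even n) (μ : Fin n) :
    Γg n μ * ΓI n Finset.univ + ΓI n Finset.univ * Γg n μ = 0 := by
  apply co_inj
  rw [map_add, co_mul, ρ_Γg, co_mul_Γg, co_ΓI, map_zero]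
  funext K
  rw [Pi.add_apply, fop_apply, gop_apply]
  by_cases h : tog μ K = Finset.univ
  · rw [h]
    have hμu : μ ∈ (Finset.univ : Finset (Fin n)) := Finset.mem_univ μ
    have hcu : (Finset.univ : Finset (Fin n)).card = n := by
      rw [Finset.card_univ, Fintype.card_fin]
    have h1 := sign_cnl_cng μ (Finset.univ : Finset (Fin n))
    rw [hcu, heven.neg_one_pow, show mm μ (Finset.univ : Finset (Fin n)) = -1
      from if_pos hμu, one_mul] at h1
    have hL := neg_one_pow_sq (cnl μ (Finset.univ : Finset (Fin n)))
    have hG : (-1:ℂ)^(cng μ (Finset.univ : Finset (Fin n)))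
        = -(-1:ℂ)^(cnl μ (Finset.univ : Finset (Fin n))) := by
      linear_combination ((-1:ℂ)^(cnl μ (Finset.univ : Finset (Fin n)))) * h1
        - ((-1:ℂ)^(cng μ (Finset.univ : Finset (Fin n)))) * hL
    unfold eL eR
    rw [hG, show mm μ (Finset.univ : Finset (Fin n)) = -1 from if_pos hμu]
    unfold δ
    rw [Pi.single_eq_same, Pi.zero_apply]
    ring
  · unfold δ
    rw [Pi.single_eq_of_ne h, Pi.zero_apply]
    ring

lemma Γg_mem_range (μ : Fin n) : Γg n μ ∈ LinearMap.range (emb n) :=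
  ⟨Pi.single μ 1, rfl⟩

lemma biv_comm_mem {i j : Fin n} (hij : i ≠ j) (μ : Fin n) :
    Γg n i * Γg n j * Γg n μ - Γg n μ * (Γg n i * Γg n j) ∈ LinearMap.range (emb n) := by
  by_cases hμi : μ = i
  · subst hμi
    have e1 : Γg n μ * Γg n j * Γg n μ = Γg n j := by
      rw [mul_assoc, Γg_anti (Ne.symm hij), mul_neg, ← mul_assoc, Γg_sq, neg_one_mul, neg_neg]
    have e2 : Γg n μ * (Γg n μ * Γg n j) = -(Γg n j) := by
      rw [← mul_assoc, Γg_sq, neg_one_mul]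
    rw [e1, e2, sub_neg_eq_add, ← two_smul ℂ (Γg n j)]
    exact Submodule.smul_mem _ _ (Γg_mem_range j)
  · by_cases hμj : μ = j
    · subst hμj
      have e1 : Γg n i * Γg n μ * Γg n μ = -(Γg n i) := by
        rw [mul_assoc, Γg_sq, mul_neg, mul_one]
      have e2 : Γg n μ * (Γg n i * Γg n μ) = Γg n i := by
        rw [← mul_assoc, Γg_anti (Ne.symm hij), neg_mul, mul_assoc, Γg_sq, mul_neg,
          mul_one, neg_neg]
      rw [e1, e2]
      have : -(Γg n i) - Γg n i = (-2 : ℂ) • Γg n i := by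
        rw [neg_smul]
        rw [two_smul]
        abel
      rw [this]
      exact Submodule.smul_mem _ _ (Γg_mem_range i)
    · have e2 : Γg n μ * (Γg n i * Γg n j) = Γg n i * Γg n j * Γg n μ := by
        rw [← mul_assoc, Γg_anti (fun hh => hμi hh), neg_mul, mul_assoc,
          Γg_anti (fun hh => hμj hh), mul_neg, neg_neg, mul_assoc]
      rw [e2, sub_self]
      exact Submodule.zero_mem _
lemma co_algebraMap (c : ℂ) :
    co n (algebraMap ℂ (Cl n) c) = c • δ (∅ : Finset (Fin n)) := by
  rw [co_apply, AlgHom.commutes, Module.algebraMap_end_apply]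

lemma comm_mem {A : Cl n}
    (hA : A ∈ Submodule.span ℂ {x : Cl n | ∃ i j : Fin n, i ≠ j ∧ x = Γg n i * Γg n j})
    (μ : Fin n) : A * Γg n μ - Γg n μ * A ∈ LinearMap.range (emb n) := by
  induction hA using Submodule.span_induction with
  | mem x hx =>
      obtain ⟨i, j, hij, rfl⟩ := hx
      exact biv_comm_mem hij μ
  | zero => simp
  | add x y _ _ ihx ihy =>
      have h : (x + y) * Γg n μ - Γg n μ * (x + y)
          = (x * Γg n μ - Γg n μ * x) + (y * Γg n μ - Γg n μ * y) := by
        noncomm_ring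
      rw [h]
      exact Submodule.add_mem _ ihx ihy
  | smul c x _ ih =>
      have h : (c • x) * Γg n μ - Γg n μ * (c • x) = c • (x * Γg n μ - Γg n μ * x) := by
        rw [smul_mul_assoc, mul_smul_comm, smul_sub]
      rw [h]
      exact Submodule.smul_mem _ _ ih

end Stmt6

open Stmt6 in
theorem stmt_6' (n : ℕ) (hn : 1 ≤ n) (heven : Even n) (a b : Cl n) :
    (∀ v : Fin n → ℂ, sp a b (emb n v) ∈ Set.range (emb n)) ↔
    (∃ (α β γ : ℂ) (A : Cl n),
      A ∈ Submodule.span ℂ {x : Cl n | ∃ i j : Fin n, i ≠ j ∧ x = Γg n i * Γg n j} ∧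
      a = algebraMap ℂ (Cl n) α + A + γ • ΓI n Finset.univ ∧
      b = algebraMap ℂ (Cl n) β + A - γ • ΓI n Finset.univ) := by
  have hcu : (Finset.univ : Finset (Fin n)).card = n := by
    rw [Finset.card_univ, Fintype.card_fin]
  have huniv_ne : (Finset.univ : Finset (Fin n)) ≠ ∅ := by
    intro hc
    have := Finset.card_eq_zero.mpr hc
    omega
  constructor
  · -- forward
    intro h
    have hrel := key_rel h
    set F := Finset.univ.filter (fun J : Finset (Fin n) => J.card = 2) with hF
    set A := ∑ J ∈ F, ((co n a J + co n b J) / 2) • ΓI n J with hAdef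
    refine ⟨co n a ∅, co n b ∅, (co n a Finset.univ - co n b Finset.univ) / 2, A, ?_, ?_, ?_⟩
    · -- A in span
      apply Submodule.sum_mem
      intro J hJ
      rw [hF, Finset.mem_filter] at hJ
      apply Submodule.smul_mem
      apply Submodule.subset_span
      obtain ⟨x, y, hxy, hJ2⟩ := Finset.card_eq_two.mp hJ.2
      have hpair : ∀ (u w : Fin n), u < w → ΓI n {u, w} = Γg n u * Γg n w := by
        intro u w huw
        have h1 : ∀ b ∈ ({w} : Finset (Fin n)), u ≤ b := by
          intro b hb
          rw [Finset.mem_singleton] at hb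
          exact hb ▸ le_of_lt huw
        have h2 : u ∉ ({w} : Finset (Fin n)) := by
          rw [Finset.mem_singleton]
          exact ne_of_lt huw
        rw [show ({u, w} : Finset (Fin n)) = insert u {w} from rfl, ΓI_insert h1 h2,
          ΓI_singleton]
      rcases lt_or_gt_of_ne hxy with hlt | hlt
      · exact ⟨x, y, hxy, by rw [hJ2, hpair x y hlt]⟩
      · exact ⟨y, x, hxy.symm, by rw [hJ2, Finset.pair_comm, hpair y x hlt]⟩
    all_goals {
      apply co_inj
      have hco_sum : co n A = ∑ J ∈ F, ((co n a J + co n b J) / 2) • δ J := by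
        rw [hAdef, map_sum]
        exact Finset.sum_congr rfl (fun J _ => by rw [map_smul, co_ΓI])
      first
      | rw [map_add, map_add, co_algebraMap, map_smul, co_ΓI, hco_sum]
      | rw [map_sub, map_add, co_algebraMap, map_smul, co_ΓI, hco_sum]
      funext K
      simp only [Pi.add_apply, Pi.sub_apply, Pi.smul_apply, Finset.sum_apply, smul_eq_mul]
      have hsum : (∑ J ∈ F, ((co n a J + co n b J) / 2) * δ J K)
          = if K.card = 2 then (co n a K + co n b K) / 2 else 0 := by
        by_cases hK2 : K.card = 2
        · rw [if_pos hK2, Finset.sum_eq_single K]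
          · unfold δ
            rw [Pi.single_eq_same, mul_one]
          · intro J _ hJK
            unfold δ
            rw [Pi.single_eq_of_ne (Ne.symm hJK), mul_zero]
          · intro hc
            exact absurd (Finset.mem_filter.mpr ⟨Finset.mem_univ K, hK2⟩) hc
        · rw [if_neg hK2]
          apply Finset.sum_eq_zero
          intro J hJ
          rw [hF, Finset.mem_filter] at hJ
          have hJK : K ≠ J := fun hc => hK2 (hc ▸ hJ.2)
          unfold δ
          rw [Pi.single_eq_of_ne hJK, mul_zero]
      rw [hsum]
      by_cases hKu : K = Finset.univ
      · subst hKu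
        unfold δ
        rw [Pi.single_eq_of_ne huniv_ne, Pi.single_eq_same, mul_zero, mul_one]
        by_cases hn2 : n = 2
        · rw [if_pos (hcu.trans hn2)]
          ring
        · rw [if_neg (fun hc => hn2 (hcu.symm.trans hc))]
          have hu := coords_univ heven hn hn2 hrel
          rw [hu]
          ring
      · unfold δ
        rw [Pi.single_eq_of_ne hKu, mul_zero]
        by_cases hK0 : K = ∅
        · subst hK0
          rw [Pi.single_eq_same, mul_one,
            if_neg (by rw [Finset.card_empty]; omega)]
          ring
        · rw [Pi.single_eq_of_ne hK0, mul_zero]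
          by_cases hK2 : K.card = 2
          · rw [if_pos hK2, coords_eq_two hrel hK2 hKu]
            ring
          · rw [if_neg hK2]
            obtain ⟨hva, hvb⟩ := coords_vanish hrel hK0 hKu hK2
            simp [hva, hvb]
    }
  · -- reverse
    rintro ⟨α, β, γ, A, hA, ha, hb⟩ v
    rw [mem_range_iff', sp_emb_eq_sum]
    apply Submodule.sum_mem
    intro μ _
    apply Submodule.smul_mem
    have hexp : sp a b (Γg n μ) = (α - β) • Γg n μ + (A * Γg n μ - Γg n μ * A)
        + γ • (ΓI n Finset.univ * Γg n μ + Γg n μ * ΓI n Finset.univ) := by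
      unfold sp
      rw [ha, hb, add_mul, add_mul, mul_sub, mul_add,
        smul_mul_assoc, mul_smul_comm, ← Algebra.commutes β (Γg n μ),
        ← Algebra.smul_def α, ← Algebra.smul_def β]
      module
    rw [hexp]
    refine Submodule.add_mem _ (Submodule.add_mem _ ?_ ?_) ?_
    · exact Submodule.smul_mem _ _ (Γg_mem_range μ)
    · exact comm_mem hA μ
    · rw [add_comm, omega_anti heven μ, smul_zero]
      exact Submodule.zero_mem _

/-- characterization of linear pairs in even dimension. -/
theorem stmt_6 (n : ℕ) (hn : 1 ≤ n) (heven : Even n) (a b : Cl n) :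
    (∀ v : Fin n → ℂ, sp a b (emb n v) ∈ Set.range (emb n)) ↔
    (∃ (α β γ : ℂ) (A : Cl n),
      A ∈ Submodule.span ℂ {x : Cl n | ∃ i j : Fin n, i ≠ j ∧ x = Γg n i * Γg n j} ∧
      a = algebraMap ℂ (Cl n) α + A + γ • ΓI n Finset.univ ∧
      b = algebraMap ℂ (Cl n) β + A - γ • ΓI n Finset.univ) :=
  stmt_6' n hn heven a b
end
end

section
/- Let A₀, A₁ ∈ M_n(ℝ) be real skew-symmetric matrices, let A := A₀ + i·A₁ ∈ M_n(ℂ), and let â := −(1/4)·∑_{i,j=1}^n A_{ij}·Γ_iΓ_j ∈ Cℓ. Then q_{â,â}(ι(v)) = ι((A₀² − A₁²)·v) holds for all v ∈ ℂⁿ if and only if A₀A₁ + A₁A₀ = 0. (Hence the linear pair (â,â) is a quadratic Clifford pair associated to the real symmetric map A₀² − A₁² exactly when the real and imaginary parts of A anticommute; this is the substance of the classification of linear quadratic Clifford pairs.) -/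
noncomputable section

lemma polar_Qf (n : ℕ) (u w : Fin n → ℂ) :
    QuadraticMap.polar (Qf n) u w = -2 * ∑ μ, u μ * w μ := by
  simp only [QuadraticMap.polar, Qf, QuadraticMap.weightedSumSquares_apply, Pi.add_apply,
    smul_eq_mul, Finset.mul_sum]
  rw [← Finset.sum_sub_distrib, ← Finset.sum_sub_distrib]
  congr 1; ext μ; ring

lemma emb_mul_Γg (n : ℕ) (v : Fin n → ℂ) (μ : Fin n) :
    emb n v * Γg n μ = ((-2) * v μ) • (1 : Cl n) - Γg n μ * emb n v := by
  have h := CliffordAlgebra.ι_mul_ι_add_swap (Q := Qf n) v (Pi.single μ 1)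
  have hp : QuadraticMap.polar (Qf n) v (Pi.single μ 1) = -2 * v μ := by
    rw [polar_Qf]
    congr 1
    simp [Pi.single_apply, mul_ite]
  rw [hp] at h
  have : emb n v * Γg n μ + Γg n μ * emb n v = algebraMap ℂ (Cl n) (-2 * v μ) := h
  rw [Algebra.algebraMap_eq_smul_one] at this
  linear_combination (norm := module) this

lemma emb_eq_sum (n : ℕ) (w : Fin n → ℂ) : emb n w = ∑ μ, w μ • Γg n μ := by
  have : w = ∑ μ, w μ • (Pi.single μ (1:ℂ) : Fin n → ℂ) := by
    funext i
    simp [Pi.single_apply]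
  conv_lhs => rw [this]
  rw [map_sum]
  simp only [map_smul, Γg]

lemma emb_injective (n : ℕ) : Function.Injective (emb n) := by
  haveI : Invertible (2 : ℂ) := invertibleOfNonzero two_ne_zero
  intro u v h
  have h2 : (CliffordAlgebra.equivExterior (Qf n)) (emb n u)
      = (CliffordAlgebra.equivExterior (Qf n)) (emb n v) := by rw [h]
  simp only [CliffordAlgebra.equivExterior, CliffordAlgebra.changeFormEquiv_apply,
    emb, CliffordAlgebra.changeForm_ι] at h2
  exact ExteriorAlgebra.ι_inj ℂ u v |>.mp h2

lemma swap_term (n : ℕ) (v : Fin n → ℂ) (i j : Fin n) :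
    emb n v * (Γg n i * Γg n j)
      = Γg n i * Γg n j * emb n v + ((-2) * v i) • Γg n j - ((-2) * v j) • Γg n i := by
  rw [← mul_assoc, emb_mul_Γg, sub_mul, smul_mul_assoc, one_mul, mul_assoc, emb_mul_Γg,
    mul_sub, mul_smul_comm, mul_one, ← mul_assoc]
  module

lemma comm_key (n : ℕ) (M : Matrix (Fin n) (Fin n) ℂ) (hM : M.transpose = -M) (v : Fin n → ℂ) :
    (-(1/4:ℂ) • ∑ i, ∑ j, M i j • (Γg n i * Γg n j)) * emb n v
      - emb n v * (-(1/4:ℂ) • ∑ i, ∑ j, M i j • (Γg n i * Γg n j))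
      = emb n (M.mulVec v) := by
  have step1 : (∑ i, ∑ j, M i j • (Γg n i * Γg n j)) * emb n v
      - emb n v * (∑ i, ∑ j, M i j • (Γg n i * Γg n j))
      = ∑ i, ∑ j, ((M i j * (2 * v i)) • Γg n j - (M i j * (2 * v j)) • Γg n i) := by
    rw [Finset.sum_mul, Finset.mul_sum, ← Finset.sum_sub_distrib]
    refine Finset.sum_congr rfl fun i _ => ?_
    rw [Finset.sum_mul, Finset.mul_sum, ← Finset.sum_sub_distrib]
    refine Finset.sum_congr rfl fun j _ => ?_
    rw [smul_mul_assoc, mul_smul_comm, swap_term]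
    module
  have s2 : ∑ i, ∑ j, (M i j * (2 * v i)) • Γg n j
      = emb n ((2:ℂ) • (M.transpose).mulVec v) := by
    rw [emb_eq_sum, Finset.sum_comm]
    refine Finset.sum_congr rfl fun j _ => ?_
    rw [← Finset.sum_smul]
    congr 1
    simp only [Pi.smul_apply, smul_eq_mul, Matrix.mulVec, dotProduct,
      Matrix.transpose_apply, Finset.mul_sum]
    exact Finset.sum_congr rfl fun i _ => by ring
  have s3 : ∑ i, ∑ j, (M i j * (2 * v j)) • Γg n i
      = emb n ((2:ℂ) • M.mulVec v) := by
    rw [emb_eq_sum]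
    refine Finset.sum_congr rfl fun i _ => ?_
    rw [← Finset.sum_smul]
    congr 1
    simp only [Pi.smul_apply, smul_eq_mul, Matrix.mulVec, dotProduct, Finset.mul_sum]
    exact Finset.sum_congr rfl fun j _ => by ring
  have step2 : (∑ i, ∑ j, ((M i j * (2 * v i)) • Γg n j - (M i j * (2 * v j)) • Γg n i))
      = emb n ((2:ℂ) • (M.transpose).mulVec v) - emb n ((2:ℂ) • M.mulVec v) := by
    rw [← s2, ← s3, ← Finset.sum_sub_distrib]
    exact Finset.sum_congr rfl fun i _ => Finset.sum_sub_distrib _ _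
  rw [smul_mul_assoc, mul_smul_comm, ← smul_sub, step1, step2, hM, Matrix.neg_mulVec]
  simp only [smul_neg, map_neg, map_smul]
  module


theorem stmt_8_aux (n : ℕ) (hn : 1 ≤ n) (A₀ A₁ : Matrix (Fin n) (Fin n) ℝ)
    (hA₀ : A₀.transpose = -A₀) (hA₁ : A₁.transpose = -A₁)
    (A : Matrix (Fin n) (Fin n) ℂ)
    (hA : A = A₀.map (Complex.ofReal) + Complex.I • A₁.map (Complex.ofReal))
    (ahat : Cl n)
    (hahat : ahat = -(1 / 4 : ℂ) • ∑ i : Fin n, ∑ j : Fin n, A i j • (Γg n i * Γg n j)) :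
    (∀ v : Fin n → ℂ,
        (ahat ^ 2 * emb n v + emb n v * ahat ^ 2 - 2 * ahat * emb n v * ahat)
          = emb n (((A₀ * A₀ - A₁ * A₁).map Complex.ofReal).mulVec v))
      ↔ A₀ * A₁ + A₁ * A₀ = 0 := by
  -- skewness of A
  have hAskew : A.transpose = -A := by
    subst hA
    ext i j
    have h0 : A₀ j i = -A₀ i j := by
      have := congrFun (congrFun hA₀ i) j
      simpa [Matrix.transpose_apply] using this
    have h1 : A₁ j i = -A₁ i j := by
      have := congrFun (congrFun hA₁ i) j
      simpa [Matrix.transpose_apply] using this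
    simp only [Matrix.transpose_apply, Matrix.add_apply, Matrix.neg_apply, Matrix.smul_apply,
      Matrix.map_apply, smul_eq_mul, h0, h1]
    push_cast
    ring
  -- the double commutator identity
  have hq : ∀ v : Fin n → ℂ,
      ahat ^ 2 * emb n v + emb n v * ahat ^ 2 - 2 * ahat * emb n v * ahat
        = emb n ((A * A).mulVec v) := by
    intro v
    have hc : ∀ w : Fin n → ℂ, ahat * emb n w - emb n w * ahat = emb n (A.mulVec w) := by
      intro w
      rw [hahat]
      exact comm_key n A hAskew w
    have e1 : ahat ^ 2 * emb n v + emb n v * ahat ^ 2 - 2 * ahat * emb n v * ahat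
        = ahat * (ahat * emb n v - emb n v * ahat)
          - (ahat * emb n v - emb n v * ahat) * ahat := by
      noncomm_ring
    rw [e1, hc v, hc (A.mulVec v), Matrix.mulVec_mulVec]
  -- matrix square decomposition
  have hAA : A * A = ((A₀ * A₀ - A₁ * A₁).map Complex.ofReal)
      + Complex.I • ((A₀ * A₁ + A₁ * A₀).map Complex.ofReal) := by
    subst hA
    ext i j
    simp only [Matrix.mul_apply, Matrix.add_apply, Matrix.smul_apply, Matrix.map_apply,
      Matrix.sub_apply, smul_eq_mul, Complex.ofReal_sub, Complex.ofReal_add]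
    push_cast
    rw [← Finset.sum_sub_distrib, ← Finset.sum_add_distrib, Finset.mul_sum,
      ← Finset.sum_add_distrib]
    refine Finset.sum_congr rfl fun k _ => ?_
    have hI : (Complex.I : ℂ) ^ 2 = -1 := Complex.I_sq
    linear_combination ((A₁ i k : ℂ) * (A₁ k j : ℂ)) * hI
  constructor
  · intro h
    have key : ∀ v : Fin n → ℂ,
        ((A₀ * A₁ + A₁ * A₀).map Complex.ofReal).mulVec v = 0 := by
      intro v
      have h1 := (hq v).symm.trans (h v)
      rw [hAA, Matrix.add_mulVec, Matrix.smul_mulVec] at h1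
      have h3 := emb_injective n h1
      have h4 : Complex.I • ((A₀ * A₁ + A₁ * A₀).map Complex.ofReal).mulVec v = 0 := by
        have := congrArg (fun w => w - ((A₀ * A₀ - A₁ * A₁).map Complex.ofReal).mulVec v) h3
        simpa using this
      have h5 := smul_eq_zero.mp h4
      rcases h5 with h5 | h5
      · exact absurd h5 Complex.I_ne_zero
      · exact h5
    ext i j
    have := congrFun (key (Pi.single j 1)) i
    simp only [Matrix.mulVec_single, Matrix.map_apply, mul_one, Pi.zero_apply, Pi.smul_apply,
      MulOpposite.op_one, one_smul, Matrix.col_apply] at this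
    exact_mod_cast this
  · intro h
    intro v
    rw [hq v, hAA, h]
    simp [Matrix.map_zero]

/-- the linear pair `(â, â)` is a quadratic Clifford pair associated to
`A₀² − A₁²` exactly when the real and imaginary parts of `A` anticommute. -/
theorem stmt_8 (n : ℕ) (hn : 1 ≤ n) (A₀ A₁ : Matrix (Fin n) (Fin n) ℝ)
    (hA₀ : A₀.transpose = -A₀) (hA₁ : A₁.transpose = -A₁)
    (A : Matrix (Fin n) (Fin n) ℂ)
    (hA : A = A₀.map (Complex.ofReal) + Complex.I • A₁.map (Complex.ofReal))
    (ahat : Cl n)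
    (hahat : ahat = -(1 / 4 : ℂ) • ∑ i : Fin n, ∑ j : Fin n, A i j • (Γg n i * Γg n j)) :
    (∀ v : Fin n → ℂ,
        qp ahat ahat (emb n v) = emb n (((A₀ * A₀ - A₁ * A₁).map Complex.ofReal).mulVec v))
      ↔ A₀ * A₁ + A₁ * A₀ = 0 := by
  simp only [qp]
  exact stmt_8_aux n hn A₀ A₁ hA₀ hA₁ A hA ahat hahat
end
end

section
/- Let B ∈ M_n(ℝ) be a symmetric matrix (Bᵀ = B) such that for every nonzero real λ the eigenspace of B for the eigenvalue λ has even dimension. Then there exist real skew-symmetric matrices Δ₀, Δ₁ ∈ M_n(ℝ) (Δ₀ᵀ = −Δ₀, Δ₁ᵀ = −Δ₁) with Δ₀Δ₁ + Δ₁Δ₀ = 0 and B = Δ₀² − Δ₁². (Existence of a linear quadratic Clifford pair associated to any symmetric map whose nonzero eigenvalues all have even multiplicities.) -/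
open Finset in
lemma aux_card_eigen (n : ℕ) (B : Matrix (Fin n) (Fin n) ℝ) (hB' : B.IsHermitian) (lam : ℝ) :
    (Finset.univ.filter (fun i => hB'.eigenvalues i = lam)).card
      = Module.finrank ℝ (LinearMap.ker (Matrix.toLin' (B - lam • (1 : Matrix (Fin n) (Fin n) ℝ)))) := by
  classical
  set μ := hB'.eigenvalues with hμ
  set U : Matrix (Fin n) (Fin n) ℝ := (hB'.eigenvectorUnitary : Matrix (Fin n) (Fin n) ℝ) with hUdef
  have hU1 : U * star U = 1 := Matrix.mem_unitaryGroup_iff.mp hB'.eigenvectorUnitary.2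
  have hU2 : star U * U = 1 := Matrix.mem_unitaryGroup_iff'.mp hB'.eigenvectorUnitary.2
  have hdetU : IsUnit U.det :=
    (Matrix.isUnit_iff_isUnit_det U).mp ⟨⟨U, star U, hU1, hU2⟩, rfl⟩
  have hdetUs : IsUnit (star U).det :=
    (Matrix.isUnit_iff_isUnit_det (star U)).mp ⟨⟨star U, U, hU2, hU1⟩, rfl⟩
  have hspec : B = U * Matrix.diagonal μ * star U := by
    have := hB'.spectral_theorem
    simpa [RCLike.ofReal_real_eq_id] using this
  have hM : B - lam • 1 = U * Matrix.diagonal (fun i => μ i - lam) * star U := by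
    have e : Matrix.diagonal (fun i => μ i - lam)
        = Matrix.diagonal μ - lam • (1 : Matrix (Fin n) (Fin n) ℝ) := by
      rw [Matrix.smul_one_eq_diagonal]
      ext i j
      by_cases h : i = j <;> simp [Matrix.diagonal, h]
    rw [e, Matrix.mul_sub, Matrix.sub_mul, ← hspec, Matrix.mul_smul, Matrix.smul_mul,
      Matrix.mul_one, hU1]
  have hrank : (B - lam • (1 : Matrix (Fin n) (Fin n) ℝ)).rank
      = Fintype.card {i // μ i - lam ≠ 0} := by
    rw [hM, Matrix.rank_mul_eq_left_of_isUnit_det _ _ hdetUs,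
      Matrix.rank_mul_eq_right_of_isUnit_det _ _ hdetU, Matrix.rank_diagonal]
  have hrn : (B - lam • (1 : Matrix (Fin n) (Fin n) ℝ)).rank
      + Module.finrank ℝ (LinearMap.ker (Matrix.toLin' (B - lam • (1 : Matrix (Fin n) (Fin n) ℝ)))) = n := by
    have := LinearMap.finrank_range_add_finrank_ker
      (Matrix.toLin' (B - lam • (1 : Matrix (Fin n) (Fin n) ℝ)))
    rw [Matrix.toLin'_apply'] at this
    convert this using 2
    · rfl
    · rfl
    · simp
  have hcards : (Finset.univ.filter (fun i => μ i = lam)).card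
      + Fintype.card {i // μ i - lam ≠ 0} = n := by
    rw [Fintype.card_subtype]
    have : (Finset.univ.filter (fun i => μ i - lam ≠ 0))
        = (Finset.univ.filter (fun i => ¬ (μ i = lam))) := by
      apply Finset.filter_congr
      intro i _
      simp [sub_eq_zero]
    rw [this, Finset.card_filter_add_card_filter_not]
    simp
  omega

open Finset in
lemma aux_exists_invol {α : Type*} [DecidableEq α] :
    ∀ (m : ℕ) (s : Finset α), s.card = m → Even m →
    ∃ f : α → α, (∀ i, f (f i) = i) ∧ (∀ i ∉ s, f i = i) ∧ (∀ i ∈ s, f i ∈ s ∧ f i ≠ i) := by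
  intro m
  induction m using Nat.strong_induction_on with
  | _ m ih =>
    intro s hcard hev
    rcases Nat.eq_zero_or_pos m with hm | hm
    · subst hm
      refine ⟨id, fun i => rfl, fun i _ => rfl, fun i hi => ?_⟩
      rw [Finset.card_eq_zero.mp hcard] at hi; exact absurd hi (Finset.notMem_empty i)
    · have h2 : 2 ≤ m := by
        rcases hev with ⟨k, hk⟩; omega
      obtain ⟨a, ha⟩ := Finset.card_pos.mp (by omega : 0 < s.card)
      have hcae : (s.erase a).card = m - 1 := by rw [Finset.card_erase_of_mem ha, hcard]
      obtain ⟨b, hb⟩ := Finset.card_pos.mp (by omega : 0 < (s.erase a).card)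
      have hba : b ≠ a := Finset.ne_of_mem_erase hb
      have hbs : b ∈ s := Finset.mem_of_mem_erase hb
      set t := (s.erase a).erase b with ht
      have hct : t.card = m - 2 := by
        rw [ht, Finset.card_erase_of_mem hb, hcae]; omega
      have hevt : Even (m - 2) := by rcases hev with ⟨k, hk⟩; exact ⟨k - 1, by omega⟩
      obtain ⟨g, hg1, hg2, hg3⟩ := ih (m - 2) (by omega) t hct hevt
      have hat : a ∉ t := fun h => (Finset.notMem_erase a s (Finset.mem_of_mem_erase h)).elim
      have hbt : b ∉ t := Finset.notMem_erase b _
      refine ⟨fun i => if i = a then b else if i = b then a else g i, ?_, ?_, ?_⟩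
      · intro i
        by_cases hia : i = a
        · simp [hia, hba]
        · by_cases hib : i = b
          · simp [hib, hba]
          · simp only [if_neg hia, if_neg hib]
            by_cases hit : i ∈ t
            · have := hg3 i hit
              have h1 : g i ≠ a := fun h => hat (h ▸ this.1)
              have h2 : g i ≠ b := fun h => hbt (h ▸ this.1)
              simp [h1, h2, hg1 i]
            · rw [hg2 i hit]; simp [hia, hib, hg2 i hit]
      · intro i hi
        have hia : i ≠ a := fun h => hi (h ▸ ha)
        have hib : i ≠ b := fun h => hi (h ▸ hbs)
        have hit : i ∉ t := fun h => hi (Finset.mem_of_mem_erase (Finset.mem_of_mem_erase h))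
        simp [hia, hib, hg2 i hit]
      · intro i hi
        by_cases hia : i = a
        · subst hia; simp [hbs, hba]
        · by_cases hib : i = b
          · subst hib; simp [hba, ha, Ne.symm hba]
          · have hit : i ∈ t := Finset.mem_erase.mpr ⟨hib, Finset.mem_erase.mpr ⟨hia, hi⟩⟩
            have := hg3 i hit
            simp only [if_neg hia, if_neg hib]
            exact ⟨Finset.mem_of_mem_erase (Finset.mem_of_mem_erase this.1), this.2⟩

noncomputable section

/-- every real symmetric matrix whose nonzero eigenvalues all have even
multiplicity is of the form `Δ₀² − Δ₁²` with `Δ₀, Δ₁` anticommuting skew-symmetric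
matrices. -/
theorem stmt_9 (n : ℕ) (B : Matrix (Fin n) (Fin n) ℝ) (hB : B.transpose = B)
    (heven : ∀ lam : ℝ, lam ≠ 0 →
      Even (Module.finrank ℝ (LinearMap.ker (Matrix.toLin' (B - lam • (1 : Matrix (Fin n) (Fin n) ℝ)))))) :
    ∃ Δ₀ Δ₁ : Matrix (Fin n) (Fin n) ℝ,
      Δ₀.transpose = -Δ₀ ∧ Δ₁.transpose = -Δ₁ ∧
      Δ₀ * Δ₁ + Δ₁ * Δ₀ = 0 ∧ B = Δ₀ * Δ₀ - Δ₁ * Δ₁ := by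
  classical
  have hB' : B.IsHermitian := by
    rw [Matrix.IsHermitian, Matrix.conjTranspose_eq_transpose_of_trivial, hB]
  set μ := hB'.eigenvalues with hμdef
  -- multiplicity of each nonzero eigenvalue is even
  have hmult : ∀ lam : ℝ, lam ≠ 0 →
      Even (Finset.univ.filter (fun i => μ i = lam)).card := by
    intro lam hlam
    rw [aux_card_eigen n B hB' lam]
    exact heven lam hlam
  -- build involution σ
  have key : ∀ lam : ℝ, ∃ f : Fin n → Fin n,
      (∀ i, f (f i) = i) ∧ (∀ i, μ i ≠ lam → f i = i) ∧
      (∀ i, μ i = lam → μ (f i) = lam) ∧ (lam ≠ 0 → ∀ i, μ i = lam → f i ≠ i) := by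
    intro lam
    by_cases hlam : lam = 0
    · exact ⟨id, fun i => rfl, fun i _ => rfl, fun i hi => hi ▸ rfl,
        fun h => absurd hlam h⟩
    obtain ⟨f, h1, h2, h3⟩ := aux_exists_invol (Finset.univ.filter (fun i => μ i = lam)).card
      (Finset.univ.filter (fun i => μ i = lam)) rfl (hmult lam hlam)
    refine ⟨f, h1, fun i hi => h2 i (by simp [hi]), fun i hi => ?_, fun _ i hi => (h3 i (by simp [hi])).2⟩
    have := (h3 i (by simp [hi])).1
    simpa using (Finset.mem_filter.mp this).2
  choose F hF1 hF2 hF3 hF4 using key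
  set σ : Fin n → Fin n := fun i => F (μ i) i with hσdef
  have hσμ : ∀ i, μ (σ i) = μ i := fun i => hF3 (μ i) i rfl
  have hσσ : ∀ i, σ (σ i) = i := by
    intro i
    have : σ (σ i) = F (μ (σ i)) (σ i) := rfl
    rw [this, hσμ i]
    exact hF1 (μ i) i
  have hσne : ∀ i, μ i ≠ 0 → σ i ≠ i := fun i h => hF4 (μ i) h i rfl
  -- sign function
  set ε : Fin n → ℝ := fun i => if i ≤ σ i then 1 else -1 with hεdef
  have hεsq : ∀ i, ε i * ε i = 1 := by
    intro i
    by_cases h : i ≤ σ i <;> simp [hεdef, h]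
  have hεflip : ∀ i, μ i ≠ 0 → ε (σ i) = - ε i := by
    intro i h
    have hne := hσne i h
    rcases lt_or_gt_of_ne (Ne.symm hne) with hlt | hgt
    · have h1 : ε i = 1 := by simp [hεdef, le_of_lt hlt]
      have h2 : ε (σ i) = -1 := by
        have : ¬ σ i ≤ σ (σ i) := by rw [hσσ i]; exact not_le_of_gt hlt
        simp [hεdef, this]
      rw [h1, h2]
    · have h1 : ε i = -1 := by
        have : ¬ i ≤ σ i := not_le_of_gt hgt
        simp [hεdef, this]
      have h2 : ε (σ i) = 1 := by
        have : σ i ≤ σ (σ i) := by rw [hσσ i]; exact le_of_lt hgt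
        simp [hεdef, this]
      rw [h1, h2, neg_neg]
  -- diagonal-basis skew matrices
  set D₀ : Matrix (Fin n) (Fin n) ℝ :=
    Matrix.of (fun i j => if μ i < 0 ∧ j = σ i then ε i * Real.sqrt (-μ i) else 0) with hD₀def
  set D₁ : Matrix (Fin n) (Fin n) ℝ :=
    Matrix.of (fun i j => if 0 < μ i ∧ j = σ i then ε i * Real.sqrt (μ i) else 0) with hD₁def
  have hD₀T : D₀.transpose = -D₀ := by
    ext i j
    simp only [Matrix.transpose_apply, Matrix.neg_apply, hD₀def, Matrix.of_apply]
    by_cases h : μ i < 0 ∧ j = σ i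
    · obtain ⟨h1, h2⟩ := h
      have hμj : μ j = μ i := by rw [h2, hσμ]
      have hij : i = σ j := by rw [h2, hσσ]
      have hcond : μ j < 0 ∧ i = σ j := ⟨hμj ▸ h1, hij⟩
      rw [if_pos hcond, if_pos ⟨h1, h2⟩]
      have : ε j = - ε i := by rw [h2]; exact hεflip i (ne_of_lt h1)
      rw [this]
      have : Real.sqrt (-μ j) = Real.sqrt (-μ i) := by rw [hμj]
      rw [this]; ring
    · rw [if_neg h, if_neg, neg_zero]
      intro ⟨h1, h2⟩
      apply h
      have hji : j = σ i := by rw [h2, hσσ]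
      have : μ i = μ j := by rw [hji, hσμ]
      exact ⟨this ▸ h1, hji⟩
  have hD₁T : D₁.transpose = -D₁ := by
    ext i j
    simp only [Matrix.transpose_apply, Matrix.neg_apply, hD₁def, Matrix.of_apply]
    by_cases h : 0 < μ i ∧ j = σ i
    · obtain ⟨h1, h2⟩ := h
      have hμj : μ j = μ i := by rw [h2, hσμ]
      have hij : i = σ j := by rw [h2, hσσ]
      have hcond : 0 < μ j ∧ i = σ j := ⟨hμj ▸ h1, hij⟩
      rw [if_pos hcond, if_pos ⟨h1, h2⟩]
      have : ε j = - ε i := by rw [h2]; exact hεflip i (ne_of_gt h1)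
      rw [this]
      have : Real.sqrt (μ j) = Real.sqrt (μ i) := by rw [hμj]
      rw [this]; ring
    · rw [if_neg h, if_neg, neg_zero]
      intro ⟨h1, h2⟩
      apply h
      have hji : j = σ i := by rw [h2, hσσ]
      have : μ i = μ j := by rw [hji, hσμ]
      exact ⟨this ▸ h1, hji⟩
  -- product helper
  have hmulD₀ : ∀ (X : Matrix (Fin n) (Fin n) ℝ) i j,
      (D₀ * X) i j = D₀ i (σ i) * X (σ i) j := by
    intro X i j
    rw [Matrix.mul_apply]
    apply Finset.sum_eq_single_of_mem (σ i) (Finset.mem_univ _)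
    intro k _ hk
    have : D₀ i k = 0 := by
      simp only [hD₀def, Matrix.of_apply]
      rw [if_neg]; intro ⟨_, h2⟩; exact hk h2
    rw [this, zero_mul]
  have hmulD₁ : ∀ (X : Matrix (Fin n) (Fin n) ℝ) i j,
      (D₁ * X) i j = D₁ i (σ i) * X (σ i) j := by
    intro X i j
    rw [Matrix.mul_apply]
    apply Finset.sum_eq_single_of_mem (σ i) (Finset.mem_univ _)
    intro k _ hk
    have : D₁ i k = 0 := by
      simp only [hD₁def, Matrix.of_apply]
      rw [if_neg]; intro ⟨_, h2⟩; exact hk h2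
    rw [this, zero_mul]
  have hD₀D₁ : D₀ * D₁ = 0 := by
    ext i j
    rw [hmulD₀ D₁ i j, Matrix.zero_apply]
    by_cases h : μ i < 0
    · have : D₁ (σ i) j = 0 := by
        simp only [hD₁def, Matrix.of_apply]
        rw [if_neg]; intro ⟨h1, _⟩
        rw [hσμ i] at h1; exact absurd h (not_lt_of_gt h1)
      rw [this, mul_zero]
    · have : D₀ i (σ i) = 0 := by
        simp only [hD₀def, Matrix.of_apply]
        rw [if_neg]; intro ⟨h1, _⟩; exact h h1
      rw [this, zero_mul]
  have hD₁D₀ : D₁ * D₀ = 0 := by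
    ext i j
    rw [hmulD₁ D₀ i j, Matrix.zero_apply]
    by_cases h : 0 < μ i
    · have : D₀ (σ i) j = 0 := by
        simp only [hD₀def, Matrix.of_apply]
        rw [if_neg]; intro ⟨h1, _⟩
        rw [hσμ i] at h1; exact absurd h (not_lt_of_gt h1)
      rw [this, mul_zero]
    · have : D₁ i (σ i) = 0 := by
        simp only [hD₁def, Matrix.of_apply]
        rw [if_neg]; intro ⟨h1, _⟩; exact h h1
      rw [this, zero_mul]
  have hD₀sq : D₀ * D₀ = Matrix.diagonal (fun i => if μ i < 0 then μ i else 0) := by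
    ext i j
    rw [hmulD₀ D₀ i j]
    by_cases h : μ i < 0
    · have h1 : D₀ i (σ i) = ε i * Real.sqrt (-μ i) := by
        simp [hD₀def, h]
      have h2 : D₀ (σ i) j = if j = i then ε (σ i) * Real.sqrt (-μ i) else 0 := by
        simp only [hD₀def, Matrix.of_apply]
        have hc : μ (σ i) < 0 := by rw [hσμ]; exact h
        have hs : σ (σ i) = i := hσσ i
        by_cases hj : j = i
        · rw [if_pos ⟨hc, by rw [hj, hs]⟩, if_pos hj, hσμ]
        · rw [if_neg, if_neg hj]
          intro ⟨_, h4⟩; rw [hs] at h4; exact hj h4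
      rw [h1, h2]
      by_cases hj : j = i
      · rw [if_pos hj, hj, Matrix.diagonal_apply_eq, if_pos h]
        rw [hεflip i (ne_of_lt h)]
        have : Real.sqrt (-μ i) * Real.sqrt (-μ i) = -μ i :=
          Real.mul_self_sqrt (by linarith)
        calc ε i * Real.sqrt (-μ i) * (-ε i * Real.sqrt (-μ i))
            = -(ε i * ε i) * (Real.sqrt (-μ i) * Real.sqrt (-μ i)) := by ring
          _ = μ i := by rw [hεsq i, this]; ring
      · rw [if_neg hj, mul_zero, Matrix.diagonal_apply_ne _ (Ne.symm hj)]
    · have h1 : D₀ i (σ i) = 0 := by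
        simp only [hD₀def, Matrix.of_apply]
        rw [if_neg]; intro ⟨h1, _⟩; exact h h1
      rw [h1, zero_mul]
      by_cases hj : j = i
      · rw [hj, Matrix.diagonal_apply_eq, if_neg h]
      · rw [Matrix.diagonal_apply_ne _ (Ne.symm hj)]
  have hD₁sq : D₁ * D₁ = Matrix.diagonal (fun i => if 0 < μ i then -μ i else 0) := by
    ext i j
    rw [hmulD₁ D₁ i j]
    by_cases h : 0 < μ i
    · have h1 : D₁ i (σ i) = ε i * Real.sqrt (μ i) := by
        simp [hD₁def, h]
      have h2 : D₁ (σ i) j = if j = i then ε (σ i) * Real.sqrt (μ i) else 0 := by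
        simp only [hD₁def, Matrix.of_apply]
        have hc : 0 < μ (σ i) := by rw [hσμ]; exact h
        have hs : σ (σ i) = i := hσσ i
        by_cases hj : j = i
        · rw [if_pos ⟨hc, by rw [hj, hs]⟩, if_pos hj, hσμ]
        · rw [if_neg, if_neg hj]
          intro ⟨_, h4⟩; rw [hs] at h4; exact hj h4
      rw [h1, h2]
      by_cases hj : j = i
      · rw [if_pos hj, hj, Matrix.diagonal_apply_eq, if_pos h]
        rw [hεflip i (ne_of_gt h)]
        have : Real.sqrt (μ i) * Real.sqrt (μ i) = μ i :=
          Real.mul_self_sqrt (le_of_lt h)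
        calc ε i * Real.sqrt (μ i) * (-ε i * Real.sqrt (μ i))
            = -(ε i * ε i) * (Real.sqrt (μ i) * Real.sqrt (μ i)) := by ring
          _ = -μ i := by rw [hεsq i, this]; ring
      · rw [if_neg hj, mul_zero, Matrix.diagonal_apply_ne _ (Ne.symm hj)]
    · have h1 : D₁ i (σ i) = 0 := by
        simp only [hD₁def, Matrix.of_apply]
        rw [if_neg]; intro ⟨h1, _⟩; exact h h1
      rw [h1, zero_mul]
      by_cases hj : j = i
      · rw [hj, Matrix.diagonal_apply_eq, if_neg h]
      · rw [Matrix.diagonal_apply_ne _ (Ne.symm hj)]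
  have hDdiff : D₀ * D₀ - D₁ * D₁ = Matrix.diagonal μ := by
    rw [hD₀sq, hD₁sq]
    ext i j
    simp only [Matrix.sub_apply]
    by_cases hij : i = j
    · subst hij
      simp only [Matrix.diagonal_apply_eq]
      by_cases h : μ i < 0
      · simp [h, asymm h]
      · by_cases h' : 0 < μ i
        · simp [h, h']
        · have h0 : μ i = 0 := le_antisymm (not_lt.mp h') (not_lt.mp h)
          simp [h, h', h0]
    · rw [Matrix.diagonal_apply_ne _ hij, Matrix.diagonal_apply_ne _ hij,
        Matrix.diagonal_apply_ne _ hij, sub_zero]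
  -- conjugate with the eigenvector unitary
  set U : Matrix (Fin n) (Fin n) ℝ := (hB'.eigenvectorUnitary : Matrix (Fin n) (Fin n) ℝ) with hUdef
  have hU1 : U * star U = 1 := Matrix.mem_unitaryGroup_iff.mp hB'.eigenvectorUnitary.2
  have hU2 : star U * U = 1 := Matrix.mem_unitaryGroup_iff'.mp hB'.eigenvectorUnitary.2
  have hspec : B = U * Matrix.diagonal μ * star U := by
    have := hB'.spectral_theorem
    simpa [RCLike.ofReal_real_eq_id] using this
  have hstarT : star U = U.transpose := by
    rw [Matrix.star_eq_conjTranspose, Matrix.conjTranspose_eq_transpose_of_trivial]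
  have conj : ∀ X Y : Matrix (Fin n) (Fin n) ℝ,
      (U * X * star U) * (U * Y * star U) = U * (X * Y) * star U := by
    intro X Y
    simp only [← Matrix.mul_assoc]
    rw [Matrix.mul_assoc (U * X) (star U) U, hU2, Matrix.mul_one]
  refine ⟨U * D₀ * star U, U * D₁ * star U, ?_, ?_, ?_, ?_⟩
  · rw [hstarT, Matrix.transpose_mul, Matrix.transpose_mul, Matrix.transpose_transpose, hD₀T]
    rw [Matrix.neg_mul, Matrix.mul_neg, ← Matrix.mul_assoc]
  · rw [hstarT, Matrix.transpose_mul, Matrix.transpose_mul, Matrix.transpose_transpose, hD₁T]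
    rw [Matrix.neg_mul, Matrix.mul_neg, ← Matrix.mul_assoc]
  · rw [conj D₀ D₁, conj D₁ D₀, hD₀D₁, hD₁D₀, Matrix.mul_zero, Matrix.zero_mul, add_zero]
  · rw [conj D₀ D₀, conj D₁ D₁, ← Matrix.sub_mul, ← Matrix.mul_sub, hDdiff, ← hspec]
end
end

section
/- If A₀, A₁ ∈ M_3(ℝ) are real skew-symmetric 3×3 matrices satisfying A₀A₁ + A₁A₀ = 0, then A₀ = 0 or A₁ = 0. (Anticommuting pairs of skew-symmetric endomorphisms are trivial in dimension three.) -/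
/-- anticommuting pairs of skew-symmetric endomorphisms are trivial in
dimension three. -/
theorem stmt_10 (A₀ A₁ : Matrix (Fin 3) (Fin 3) ℝ)
    (hA₀ : A₀.transpose = -A₀) (hA₁ : A₁.transpose = -A₁)
    (hanti : A₀ * A₁ + A₁ * A₀ = 0) :
    A₀ = 0 ∨ A₁ = 0 := by
  have s0 : ∀ i j, A₀ j i = -A₀ i j := fun i j => by
    have := congrFun (congrFun hA₀ i) j
    simpa [Matrix.transpose_apply] using this
  have s1 : ∀ i j, A₁ j i = -A₁ i j := fun i j => by
    have := congrFun (congrFun hA₁ i) j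
    simpa [Matrix.transpose_apply] using this
  have d0 : ∀ i, A₀ i i = 0 := fun i => by have := s0 i i; linarith
  have d1 : ∀ i, A₁ i i = 0 := fun i => by have := s1 i i; linarith
  set x := A₀ 0 1 with hx
  set y := A₀ 0 2 with hy
  set z := A₀ 1 2 with hz
  set u := A₁ 0 1 with hu
  set v := A₁ 0 2 with hv
  set w := A₁ 1 2 with hw
  have E : ∀ i j : Fin 3,
      (A₀ i 0 * A₁ 0 j + A₀ i 1 * A₁ 1 j + A₀ i 2 * A₁ 2 j)
      + (A₁ i 0 * A₀ 0 j + A₁ i 1 * A₀ 1 j + A₁ i 2 * A₀ 2 j) = 0 := fun i j => by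
    have := congrFun (congrFun hanti i) j
    simpa [Matrix.add_apply, Matrix.mul_apply, Fin.sum_univ_three] using this
  have e00 := E 0 0; have e11 := E 1 1; have e22 := E 2 2
  have e01 := E 0 1; have e02 := E 0 2; have e12 := E 1 2
  simp only [s0 0 1, s0 0 2, s0 1 2, s1 0 1, s1 0 2, s1 1 2, d0, d1] at e00 e11 e22 e01 e02 e12
  simp only [← hx, ← hy, ← hz, ← hu, ← hv, ← hw] at e00 e11 e22 e01 e02 e12
  -- derived: xu = yv = zw = 0
  have hxu : x * u = 0 := by nlinarith [e00, e11, e22]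
  have hyv : y * v = 0 := by nlinarith [e00, e11, e22]
  have hzw : z * w = 0 := by nlinarith [e00, e11, e22]
  have hNu : (x^2 + y^2 + z^2) * u = 0 := by
    linear_combination x*hxu - y*e12 - x*hyv + z*e02 - x*hzw
  have hNv : (x^2 + y^2 + z^2) * v = 0 := by
    linear_combination y*hyv - x*e12 - y*hxu - z*e01 - y*hzw
  have hNw : (x^2 + y^2 + z^2) * w = 0 := by
    linear_combination z*hzw - y*e01 - z*hyv + x*e02 - z*hxu
  by_cases hN : x^2 + y^2 + z^2 = 0
  · left
    have hx0 : x = 0 := (pow_eq_zero_iff (two_ne_zero)).mp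
      (by linarith [sq_nonneg x, sq_nonneg y, sq_nonneg z])
    have hy0 : y = 0 := (pow_eq_zero_iff (two_ne_zero)).mp
      (by linarith [sq_nonneg x, sq_nonneg y, sq_nonneg z])
    have hz0 : z = 0 := (pow_eq_zero_iff (two_ne_zero)).mp
      (by linarith [sq_nonneg x, sq_nonneg y, sq_nonneg z])
    have q01 : A₀ 0 1 = 0 := by rw [← hx]; exact hx0
    have q02 : A₀ 0 2 = 0 := by rw [← hy]; exact hy0
    have q12 : A₀ 1 2 = 0 := by rw [← hz]; exact hz0
    have q10 : A₀ 1 0 = 0 := by rw [s0 0 1, q01, neg_zero]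
    have q20 : A₀ 2 0 = 0 := by rw [s0 0 2, q02, neg_zero]
    have q21 : A₀ 2 1 = 0 := by rw [s0 1 2, q12, neg_zero]
    ext i j
    fin_cases i <;> fin_cases j <;>
      first
      | exact d0 _ | exact q01 | exact q02 | exact q12
      | exact q10 | exact q20 | exact q21
  · right
    have hu0 : u = 0 := by
      rcases mul_eq_zero.mp hNu with h | h
      · exact absurd h hN
      · exact h
    have hv0 : v = 0 := by
      rcases mul_eq_zero.mp hNv with h | h
      · exact absurd h hN
      · exact h
    have hw0 : w = 0 := by
      rcases mul_eq_zero.mp hNw with h | h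
      · exact absurd h hN
      · exact h
    have q01 : A₁ 0 1 = 0 := by rw [← hu]; exact hu0
    have q02 : A₁ 0 2 = 0 := by rw [← hv]; exact hv0
    have q12 : A₁ 1 2 = 0 := by rw [← hw]; exact hw0
    have q10 : A₁ 1 0 = 0 := by rw [s1 0 1, q01, neg_zero]
    have q20 : A₁ 2 0 = 0 := by rw [s1 0 2, q02, neg_zero]
    have q21 : A₁ 2 1 = 0 := by rw [s1 1 2, q12, neg_zero]
    ext i j
    fin_cases i <;> fin_cases j <;>
      first
      | exact d1 _ | exact q01 | exact q02 | exact q12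
      | exact q10 | exact q20 | exact q21
end

section
/- If A₀, A₁ ∈ M_3(ℝ) are real skew-symmetric 3×3 matrices satisfying A₀A₁ + A₁A₀ = 0, then there exists u ∈ ℝ³ such that A₀² − A₁² = u·uᵀ − ‖u‖²·I or A₀² − A₁² = ‖u‖²·I − u·uᵀ, where ‖u‖² = u₁² + u₂² + u₃², u·uᵀ is the rank-one matrix with entries u_i u_j, and I is the identity. (Consequently, in dimension 3 every symmetric map realized by a linear quadratic Clifford pair of the form (â,â) is degenerate, its possible nonzero eigenvalue having multiplicity two.) -/
set_option maxHeartbeats 1000000 in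
/-- in dimension 3, for anticommuting skew-symmetric `A₀, A₁` the
symmetric matrix `A₀² − A₁²` is of the form `±(u·uᵀ − ‖u‖²·I)`. -/
theorem stmt_11 (A₀ A₁ : Matrix (Fin 3) (Fin 3) ℝ)
    (hA₀ : A₀.transpose = -A₀) (hA₁ : A₁.transpose = -A₁)
    (hanti : A₀ * A₁ + A₁ * A₀ = 0) :
    ∃ u : Fin 3 → ℝ,
      A₀ * A₀ - A₁ * A₁ =
          Matrix.vecMulVec u u - (∑ i : Fin 3, u i ^ 2) • (1 : Matrix (Fin 3) (Fin 3) ℝ) ∨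
      A₀ * A₀ - A₁ * A₁ =
          (∑ i : Fin 3, u i ^ 2) • (1 : Matrix (Fin 3) (Fin 3) ℝ) - Matrix.vecMulVec u u := by
  have h0 : ∀ i j, A₀ j i = -A₀ i j := fun i j => by
    have := congrFun (congrFun hA₀ i) j
    simpa [Matrix.transpose_apply] using this
  have h1 : ∀ i j, A₁ j i = -A₁ i j := fun i j => by
    have := congrFun (congrFun hA₁ i) j
    simpa [Matrix.transpose_apply] using this
  -- diagonal entries vanish
  have d0 : ∀ i, A₀ i i = 0 := fun i => by have := h0 i i; linarith
  have d1 : ∀ i, A₁ i i = 0 := fun i => by have := h1 i i; linarith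
  set a1 := A₀ 2 1 with ha1
  set a2 := A₀ 0 2 with ha2
  set a3 := A₀ 1 0 with ha3
  set b1 := A₁ 2 1 with hb1
  set b2 := A₁ 0 2 with hb2
  set b3 := A₁ 1 0 with hb3
  have e01 : A₀ 0 1 = -a3 := h0 1 0
  have e12 : A₀ 1 2 = -a1 := h0 2 1
  have e20 : A₀ 2 0 = -a2 := h0 0 2
  have f01 : A₁ 0 1 = -b3 := h1 1 0
  have f12 : A₁ 1 2 = -b1 := h1 2 1
  have f20 : A₁ 2 0 = -b2 := h1 0 2
  have hE : ∀ i j, A₀ i 0 * A₁ 0 j + A₀ i 1 * A₁ 1 j + A₀ i 2 * A₁ 2 j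
      + (A₁ i 0 * A₀ 0 j + A₁ i 1 * A₀ 1 j + A₁ i 2 * A₀ 2 j) = 0 := fun i j => by
    have := congrFun (congrFun hanti i) j
    simpa [Matrix.add_apply, Matrix.mul_apply, Fin.sum_univ_three] using this
  have E00 := hE 0 0; have E11 := hE 1 1; have E22 := hE 2 2
  have E01 := hE 0 1; have E02 := hE 0 2; have E12 := hE 1 2
  simp only [d0, d1, e01, e12, e20, f01, f12, f20] at E00 E11 E22 E01 E02 E12
  -- E00 : a2b2+a3b3 = 0 (up to factor), etc.
  have p1 : a1 * b1 = 0 := by linear_combination (E00 - E11 - E22) / 4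
  have p2 : a2 * b2 = 0 := by linear_combination (E11 - E00 - E22) / 4
  have p3 : a3 * b3 = 0 := by linear_combination (E22 - E00 - E11) / 4
  have q12 : a1 * b2 + a2 * b1 = 0 := by linear_combination E01
  have q13 : a1 * b3 + a3 * b1 = 0 := by linear_combination E02
  have q23 : a2 * b3 + a3 * b2 = 0 := by linear_combination E12
  by_cases ha : a1 = 0 ∧ a2 = 0 ∧ a3 = 0
  · -- A₀ = 0, use u from A₁, second disjunct
    obtain ⟨z1, z2, z3⟩ := ha
    have HA₀ : A₀ = !![0,0,0; 0,0,0; 0,0,0] := by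
      rw [Matrix.eta_fin_three A₀, d0 0, d0 1, d0 2, e01, e12, e20, ← ha1, ← ha2, ← ha3, z1, z2, z3]
      norm_num
    have HA₁ : A₁ = !![0,-b3,b2; b3,0,-b1; -b2,b1,0] := by
      rw [Matrix.eta_fin_three A₁, d1 0, d1 1, d1 2, f01, f12, f20, ← hb1, ← hb2, ← hb3]
    refine ⟨![b1, b2, b3], Or.inr ?_⟩
    rw [HA₀, HA₁]
    ext i j
    fin_cases i <;> fin_cases j <;>
      simp [Matrix.mul_fin_three, Matrix.vecMulVec_apply, Fin.sum_univ_three,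
        Matrix.vecHead, Matrix.vecTail,
        Matrix.smul_apply, Matrix.one_apply, Matrix.sub_apply] <;> ring
  · -- some aᵢ ≠ 0 ⇒ ‖a‖² > 0 ⇒ b = 0, first disjunct
    have hna : a1 ^ 2 + a2 ^ 2 + a3 ^ 2 > 0 := by
      rcases not_and_or.mp ha with h | h
      · positivity
      rcases not_and_or.mp h with h | h <;> positivity
    have w1 : b1 = 0 := by
      have : (a1 ^ 2 + a2 ^ 2 + a3 ^ 2) * b1 = 0 := by
        linear_combination a1 * p1 + a2 * q12 + a3 * q13 - a1 * p2 - a1 * p3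
      rcases mul_eq_zero.mp this with h | h
      · exact absurd h (ne_of_gt hna)
      · exact h
    have w2 : b2 = 0 := by
      have : (a1 ^ 2 + a2 ^ 2 + a3 ^ 2) * b2 = 0 := by
        linear_combination a2 * p2 + a1 * q12 + a3 * q23 - a2 * p1 - a2 * p3
      rcases mul_eq_zero.mp this with h | h
      · exact absurd h (ne_of_gt hna)
      · exact h
    have w3 : b3 = 0 := by
      have : (a1 ^ 2 + a2 ^ 2 + a3 ^ 2) * b3 = 0 := by
        linear_combination a3 * p3 + a1 * q13 + a2 * q23 - a3 * p1 - a3 * p2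
      rcases mul_eq_zero.mp this with h | h
      · exact absurd h (ne_of_gt hna)
      · exact h
    have HA₀ : A₀ = !![0,-a3,a2; a3,0,-a1; -a2,a1,0] := by
      rw [Matrix.eta_fin_three A₀, d0 0, d0 1, d0 2, e01, e12, e20, ← ha1, ← ha2, ← ha3]
    have HA₁ : A₁ = !![0,0,0; 0,0,0; 0,0,0] := by
      rw [Matrix.eta_fin_three A₁, d1 0, d1 1, d1 2, f01, f12, f20, ← hb1, ← hb2, ← hb3, w1, w2, w3]
      norm_num
    refine ⟨![a1, a2, a3], Or.inl ?_⟩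
    rw [HA₀, HA₁]
    ext i j
    fin_cases i <;> fin_cases j <;>
      simp [Matrix.mul_fin_three, Matrix.vecMulVec_apply, Fin.sum_univ_three,
        Matrix.vecHead, Matrix.vecTail,
        Matrix.smul_apply, Matrix.one_apply, Matrix.sub_apply] <;> ring
end
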